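/- arXiv:1905.11327 — 8 statements merged into one kernel-verified Lean document; each statement's English description precedes it below -/
import Mathlib

section
/- Let F be a submodular set function on a finite set V and let ε > 0. If A₊ minimizes A ↦ F(A) + ε·|A| over all subsets A ⊆ V and A₋ minimizes A ↦ F(A) − ε·|A| over all subsets A ⊆ V, then A₊ ⊆ A₋. -/
open Finset

/-- If `F` is submodular on a finite set `V`, `ε > 0`,
`A₊` minimizes `A ↦ F(A) + ε|A|` and `A₋` minimizes `A ↦ F(A) − ε|A|`,
then `A₊ ⊆ A₋`. -/
theorem stmt1 {V : Type*} [Fintype V] [DecidableEq V]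
    (F : Finset V → ℝ)
    (hsub : ∀ A B : Finset V, F (A ∪ B) + F (A ∩ B) ≤ F A + F B)
    (ε : ℝ) (hε : 0 < ε)
    (Aplus Aminus : Finset V)
    (hplus : ∀ A : Finset V, F Aplus + ε * (Aplus.card : ℝ) ≤ F A + ε * (A.card : ℝ))
    (hminus : ∀ A : Finset V, F Aminus - ε * (Aminus.card : ℝ) ≤ F A - ε * (A.card : ℝ)) :
    Aplus ⊆ Aminus := by
  have h1 := hplus (Aplus ∩ Aminus)
  have h2 := hminus (Aplus ∪ Aminus)
  have h3 := hsub Aplus Aminus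
  have hcard : ((Aplus ∪ Aminus).card : ℝ) + ((Aplus ∩ Aminus).card : ℝ)
      = (Aplus.card : ℝ) + (Aminus.card : ℝ) := by
    have := Finset.card_union_add_card_inter Aplus Aminus
    exact_mod_cast congrArg (Nat.cast : ℕ → ℝ) this
  have hle : (Aplus.card : ℝ) ≤ ((Aplus ∩ Aminus).card : ℝ) := by nlinarith
  have hle' : Aplus.card ≤ (Aplus ∩ Aminus).card := by exact_mod_cast hle
  have heq : Aplus ∩ Aminus = Aplus :=
    Finset.eq_of_subset_of_card_le (Finset.inter_subset_left) hle'
  intro x hx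
  have : x ∈ Aplus ∩ Aminus := heq.symm ▸ hx
  exact (Finset.mem_inter.mp this).2
end

section
/- Let F be a normalized submodular set function on a finite set V, and let A₊ ⊆ A₋ ⊆ V. Let s₊ ∈ B(F) with s₊(A₊) = F(A₊), let s₋ ∈ B(F) with s₋(A₋) = F(A₋), let U = A₋ \ A₊, define G : 2^U → ℝ by G(B) = F(A₊ ∪ B) − F(A₊), and let s ∈ ℝ^U satisfy s(U) = G(U) and s(B) ≤ G(B) for all B ⊆ U. Then the vector t ∈ ℝ^V defined by t_j = (s₊)_j for j ∈ A₊, t_j = s_j for j ∈ U, and t_j = (s₋)_j for j ∈ V \ A₋, belongs to the base polytope B(F), i.e. t(V) = F(V) and t(A) ≤ F(A) for all A ⊆ V. -/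
open Finset

/-- Gluing dual certificates. For normalized submodular `F`, sets
`A₊ ⊆ A₋ ⊆ V`, tight dual certificates `s₊, s₋ ∈ B(F)` (tight on `A₊`, `A₋`
respectively), and `s` in the base polytope of `G : B ↦ F(A₊ ∪ B) − F(A₊)` on
`U = A₋ \ A₊`, the piecewise-defined vector `t` belongs to `B(F)`. -/
theorem stmt2 {V : Type*} [Fintype V] [DecidableEq V]
    (F : Finset V → ℝ)
    (hsub : ∀ A B : Finset V, F (A ∪ B) + F (A ∩ B) ≤ F A + F B)
    (hnorm : F ∅ = 0)
    (Aplus Aminus : Finset V) (hAA : Aplus ⊆ Aminus)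
    (splus : V → ℝ)
    (hsplusB : (∑ j, splus j) = F Finset.univ ∧ ∀ A : Finset V, (∑ j ∈ A, splus j) ≤ F A)
    (hsplus_tight : (∑ j ∈ Aplus, splus j) = F Aplus)
    (sminus : V → ℝ)
    (hsminusB : (∑ j, sminus j) = F Finset.univ ∧ ∀ A : Finset V, (∑ j ∈ A, sminus j) ≤ F A)
    (hsminus_tight : (∑ j ∈ Aminus, sminus j) = F Aminus)
    (s : V → ℝ)
    (hsU : (∑ j ∈ Aminus \ Aplus, s j) = F (Aplus ∪ (Aminus \ Aplus)) - F Aplus)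
    (hsB : ∀ B : Finset V, B ⊆ Aminus \ Aplus →
      (∑ j ∈ B, s j) ≤ F (Aplus ∪ B) - F Aplus) :
    ((∑ j, (if j ∈ Aplus then splus j else if j ∈ Aminus \ Aplus then s j else sminus j))
        = F Finset.univ) ∧
    (∀ A : Finset V,
      (∑ j ∈ A, (if j ∈ Aplus then splus j else if j ∈ Aminus \ Aplus then s j else sminus j))
        ≤ F A) := by
  -- split the sum over any A into three pieces
  have hsplit : ∀ A : Finset V,
      (∑ j ∈ A, (if j ∈ Aplus then splus j else if j ∈ Aminus \ Aplus then s j else sminus j))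
      = (∑ j ∈ A ∩ Aplus, splus j) + (∑ j ∈ A ∩ (Aminus \ Aplus), s j)
        + (∑ j ∈ A \ Aminus, sminus j) := by
    intro A
    have hdecomp : A = (A ∩ Aplus) ∪ ((A ∩ (Aminus \ Aplus)) ∪ (A \ Aminus)) := by
      ext x
      simp only [mem_union, mem_inter, mem_sdiff]
      by_cases h1 : x ∈ Aplus
      · have := hAA h1; tauto
      · tauto
    have hd1 : Disjoint (A ∩ Aplus) ((A ∩ (Aminus \ Aplus)) ∪ (A \ Aminus)) := by
      rw [Finset.disjoint_left]
      intro x hx hx2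
      simp only [mem_union, mem_inter, mem_sdiff] at hx hx2
      rcases hx2 with h | h
      · exact h.2.2 hx.2
      · exact h.2 (hAA hx.2)
    have hd2 : Disjoint (A ∩ (Aminus \ Aplus)) (A \ Aminus) := by
      rw [Finset.disjoint_left]
      intro x hx hx2
      simp only [mem_inter, mem_sdiff] at hx hx2
      exact hx2.2 hx.2.1
    conv_lhs => rw [hdecomp]
    rw [Finset.sum_union hd1, Finset.sum_union hd2]
    have e1 : (∑ j ∈ A ∩ Aplus,
        (if j ∈ Aplus then splus j else if j ∈ Aminus \ Aplus then s j else sminus j))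
        = ∑ j ∈ A ∩ Aplus, splus j := by
      apply Finset.sum_congr rfl
      intro x hx
      simp only [mem_inter] at hx
      simp [hx.2]
    have e2 : (∑ j ∈ A ∩ (Aminus \ Aplus),
        (if j ∈ Aplus then splus j else if j ∈ Aminus \ Aplus then s j else sminus j))
        = ∑ j ∈ A ∩ (Aminus \ Aplus), s j := by
      apply Finset.sum_congr rfl
      intro x hx
      simp only [mem_inter, mem_sdiff] at hx
      simp [hx.2.2, hx.2.1]
    have e3 : (∑ j ∈ A \ Aminus,
        (if j ∈ Aplus then splus j else if j ∈ Aminus \ Aplus then s j else sminus j))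
        = ∑ j ∈ A \ Aminus, sminus j := by
      apply Finset.sum_congr rfl
      intro x hx
      simp only [mem_sdiff] at hx
      have hnp : x ∉ Aplus := fun h => hx.2 (hAA h)
      simp [hnp, hx.2]
    rw [e1, e2, e3]; ring
  have hUA : Aplus ∪ (Aminus \ Aplus) = Aminus := Finset.union_sdiff_of_subset hAA
  constructor
  · have := hsplit Finset.univ
    simp only [Finset.univ_inter, Finset.inter_comm] at this
    have h1 : Finset.univ ∩ Aplus = Aplus := Finset.univ_inter _
    have h2 : Finset.univ ∩ (Aminus \ Aplus) = Aminus \ Aplus := Finset.univ_inter _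
    rw [hsplit Finset.univ, h1, h2, hsplus_tight, hsU, hUA]
    have h3 : (∑ j ∈ Finset.univ \ Aminus, sminus j)
        = F Finset.univ - F Aminus := by
      have := Finset.sum_sdiff (f := sminus) (Finset.subset_univ Aminus)
      rw [hsminus_tight] at this
      linarith [hsminusB.1, this]
    rw [h3]; ring
  · intro A
    rw [hsplit A]
    have h1 : (∑ j ∈ A ∩ Aplus, splus j) ≤ F (A ∩ Aplus) := hsplusB.2 _
    have h2 : (∑ j ∈ A ∩ (Aminus \ Aplus), s j)
        ≤ F (Aplus ∪ (A ∩ (Aminus \ Aplus))) - F Aplus :=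
      hsB _ (Finset.inter_subset_right)
    have h3 : (∑ j ∈ A \ Aminus, sminus j) ≤ F (A ∪ Aminus) - F Aminus := by
      have hsum : (∑ j ∈ A \ Aminus, sminus j) + (∑ j ∈ Aminus, sminus j)
          = ∑ j ∈ A ∪ Aminus, sminus j := by
        rw [← Finset.sum_union]
        · congr 1
          ext x; simp only [mem_union, mem_sdiff]; tauto
        · rw [Finset.disjoint_left]
          intro x hx; simp only [mem_sdiff] at hx; exact fun h => hx.2 h
      have := hsminusB.2 (A ∪ Aminus)
      rw [← hsum, hsminus_tight] at this
      linarith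
    -- submodularity steps
    have sub1 : F ((A ∩ Aminus) ∪ Aplus) + F ((A ∩ Aminus) ∩ Aplus)
        ≤ F (A ∩ Aminus) + F Aplus := hsub _ _
    have sub2 : F (A ∪ Aminus) + F (A ∩ Aminus) ≤ F A + F Aminus := hsub _ _
    have id1 : (A ∩ Aminus) ∪ Aplus = Aplus ∪ (A ∩ (Aminus \ Aplus)) := by
      ext x
      simp only [mem_union, mem_inter, mem_sdiff]
      by_cases h : x ∈ Aplus
      · have := hAA h; tauto
      · tauto
    have id2 : (A ∩ Aminus) ∩ Aplus = A ∩ Aplus := by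
      ext x
      simp only [mem_inter]
      constructor
      · tauto
      · intro h; exact ⟨⟨h.1, hAA h.2⟩, h.2⟩
    rw [id1, id2] at sub1
    linarith
end

section
/- Let K ⊆ ℝ^n be a nonempty compact convex set with support function f(w) = sup_{t ∈ K} ⟨w, t⟩, and let ε > 0. Then for every s ∈ ℝ^n, sup_{w ∈ [−ε, ε]^n} ( ⟨w, s⟩ − f(w) ) = ε · min_{t ∈ K} ‖s − t‖₁, where ‖·‖₁ is the ℓ¹-norm; in particular the conjugate of the box-constrained support function equals ε times the ℓ¹-distance to K. -/
open Pointwise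

/-- For a nonempty compact convex `K ⊆ ℝⁿ` with support function
`f(w) = sup_{t ∈ K} ⟨w, t⟩` and `ε > 0`, the conjugate of the box-constrained
support function equals `ε` times the `ℓ¹`-distance to `K`:
`sup_{w ∈ [−ε,ε]ⁿ} (⟨w, s⟩ − f(w)) = ε · min_{t ∈ K} ‖s − t‖₁`. -/

theorem stmt4 (n : ℕ) (K : Set (Fin n → ℝ)) (hKne : K.Nonempty)
    (hKcomp : IsCompact K) (hKconv : Convex ℝ K)
    (ε : ℝ) (hε : 0 < ε)
    (f : (Fin n → ℝ) → ℝ)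
    (hf : ∀ w : Fin n → ℝ, f w = sSup {x : ℝ | ∃ t ∈ K, x = ∑ j, w j * t j})
    (s : Fin n → ℝ) :
    sSup {x : ℝ | ∃ w : Fin n → ℝ, (∀ j, |w j| ≤ ε) ∧ x = (∑ j, w j * s j) - f w} =
      ε * sInf {d : ℝ | ∃ t ∈ K, d = ∑ j, |s j - t j|} := by
  classical
  set φ : (Fin n → ℝ) → ℝ := fun t => ∑ j, |s j - t j| with hφdef
  have hφc : Continuous φ := continuous_finset_sum _ fun j _ =>
    (continuous_const.sub (continuous_apply j)).abs
  have hDeq : {d : ℝ | ∃ t ∈ K, d = ∑ j, |s j - t j|} = φ '' K := by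
    ext d; constructor
    · rintro ⟨t, ht, rfl⟩; exact ⟨t, ht, rfl⟩
    · rintro ⟨t, ht, rfl⟩; exact ⟨t, ht, rfl⟩
  have hDcomp : IsCompact (φ '' K) := hKcomp.image hφc
  set δ := sInf (φ '' K) with hδdef
  obtain ⟨t₀, ht₀K, ht₀⟩ := hDcomp.sInf_mem (hKne.image φ)
  have hδle : ∀ t ∈ K, δ ≤ φ t := fun t ht => csInf_le hDcomp.bddBelow ⟨t, ht, rfl⟩
  have hδ0 : 0 ≤ δ := by
    rw [hδdef, ← ht₀]; exact Finset.sum_nonneg fun j _ => abs_nonneg _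
  -- facts about f
  have hipc : ∀ w : Fin n → ℝ, Continuous (fun t : Fin n → ℝ => ∑ j, w j * t j) :=
    fun w => continuous_finset_sum _ fun j _ => continuous_const.mul (continuous_apply j)
  have hset : ∀ w : Fin n → ℝ,
      {x : ℝ | ∃ t ∈ K, x = ∑ j, w j * t j} = (fun t => ∑ j, w j * t j) '' K := by
    intro w; ext x; constructor
    · rintro ⟨t, ht, rfl⟩; exact ⟨t, ht, rfl⟩
    · rintro ⟨t, ht, rfl⟩; exact ⟨t, ht, rfl⟩
  have hfle : ∀ w : Fin n → ℝ, ∀ t ∈ K, ∑ j, w j * t j ≤ f w := by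
    intro w t ht
    rw [hf, hset]
    exact le_csSup (hKcomp.image (hipc w)).bddAbove ⟨t, ht, rfl⟩
  have hfub : ∀ (w : Fin n → ℝ) (c : ℝ), (∀ t ∈ K, ∑ j, w j * t j ≤ c) → f w ≤ c := by
    intro w c h
    rw [hf, hset]
    exact csSup_le (hKne.image _) (by rintro x ⟨t, ht, rfl⟩; exact h t ht)
  set S := {x : ℝ | ∃ w : Fin n → ℝ, (∀ j, |w j| ≤ ε) ∧ x = (∑ j, w j * s j) - f w} with hSdef
  have hf0 : f 0 = 0 := by
    refine le_antisymm (hfub 0 0 fun t _ => by simp) ?_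
    have := hfle 0 t₀ ht₀K; simpa using this
  have h0S : (0 : ℝ) ∈ S := ⟨0, fun j => by simp [le_of_lt hε], by simp [hf0]⟩
  have hub : ∀ x ∈ S, x ≤ ε * δ := by
    rintro x ⟨w, hw, rfl⟩
    have h1 : ∑ j, w j * t₀ j ≤ f w := hfle w t₀ ht₀K
    have h2 : ∑ j, w j * (s j - t₀ j) = ∑ j, w j * s j - ∑ j, w j * t₀ j := by
      rw [← Finset.sum_sub_distrib]; exact Finset.sum_congr rfl fun j _ => by ring
    have h3 : ∑ j, w j * (s j - t₀ j) ≤ ∑ j, ε * |s j - t₀ j| := by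
      refine Finset.sum_le_sum fun j _ => ?_
      calc w j * (s j - t₀ j) ≤ |w j * (s j - t₀ j)| := le_abs_self _
        _ = |w j| * |s j - t₀ j| := abs_mul _ _
        _ ≤ ε * |s j - t₀ j| := mul_le_mul_of_nonneg_right (hw j) (abs_nonneg _)
    have h4 : ∑ j, ε * |s j - t₀ j| = ε * φ t₀ := by rw [Finset.mul_sum]
    have h5 : ε * φ t₀ = ε * δ := by rw [ht₀]
    linarith
  have hSbdd : BddAbove S := ⟨ε * δ, hub⟩
  have key : ∀ δ' : ℝ, 0 < δ' → δ' < δ → ε * δ' ≤ sSup S := by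
    intro δ' hδ'0 hδ'δ
    by_cases hn : n = 0
    · exfalso
      have : φ t₀ = 0 := by subst hn; simp [hφdef]
      rw [this] at ht₀; linarith
    set B := {u : Fin n → ℝ | ∑ j, |u j| ≤ δ'} with hBdef
    have hBconv : Convex ℝ B := by
      intro u hu v hv a b ha hb hab
      simp only [hBdef, Set.mem_setOf_eq] at hu hv ⊢
      have : ∀ j, |(a • u + b • v) j| ≤ a * |u j| + b * |v j| := by
        intro j
        have : (a • u + b • v) j = a * u j + b * v j := rfl
        rw [this]
        calc |a * u j + b * v j| ≤ |a * u j| + |b * v j| := abs_add_le _ _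
          _ = a * |u j| + b * |v j| := by
              rw [abs_mul, abs_mul, abs_of_nonneg ha, abs_of_nonneg hb]
      calc ∑ j, |(a • u + b • v) j| ≤ ∑ j, (a * |u j| + b * |v j|) :=
            Finset.sum_le_sum fun j _ => this j
        _ = a * ∑ j, |u j| + b * ∑ j, |v j| := by
            rw [Finset.sum_add_distrib, Finset.mul_sum, Finset.mul_sum]
        _ ≤ a * δ' + b * δ' := by
            have := mul_le_mul_of_nonneg_left hu ha
            have := mul_le_mul_of_nonneg_left hv hb
            linarith
        _ = δ' := by rw [← add_mul, hab, one_mul]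
    have hBclosed : IsClosed B :=
      isClosed_le (continuous_finset_sum _ fun j _ => (continuous_apply j).abs)
        continuous_const
    have hBbdd : Bornology.IsBounded B := by
      rw [isBounded_iff_forall_norm_le]
      refine ⟨δ', fun u hu => ?_⟩
      rw [pi_norm_le_iff_of_nonneg (le_of_lt hδ'0)]
      intro i
      have h1 : |u i| ≤ ∑ j, |u j| :=
        Finset.single_le_sum (fun j _ => abs_nonneg (u j)) (Finset.mem_univ i)
      simpa [Real.norm_eq_abs] using h1.trans hu
    have hBcomp : IsCompact B := Metric.isCompact_of_isClosed_isBounded hBclosed hBbdd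
    have hCcomp : IsCompact (K + B) := hKcomp.add hBcomp
    have hCconv : Convex ℝ (K + B) := hKconv.add hBconv
    have hsC : s ∉ K + B := by
      rintro ⟨t, htK, u, huB, hsum⟩
      have hst : ∀ j, s j - t j = u j := by
        intro j
        have : t j + u j = s j := congrFun hsum j
        linarith
      have : φ t ≤ δ' := by
        rw [hφdef]
        simp only
        calc ∑ j, |s j - t j| = ∑ j, |u j| :=
              Finset.sum_congr rfl fun j _ => by rw [hst j]
          _ ≤ δ' := huB
      have := hδle t htK
      linarith
    obtain ⟨L, u₀, hLC, hLs⟩ :=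
      geometric_hahn_banach_closed_point hCconv hCcomp.isClosed hsC
    set v : Fin n → ℝ := fun j => L (fun k => if j = k then 1 else 0) with hvdef
    have hLrep : ∀ t : Fin n → ℝ, L t = ∑ j, t j * v j := by
      intro t
      conv_lhs => rw [pi_eq_sum_univ t]
      rw [map_sum]
      exact Finset.sum_congr rfl fun j _ => by rw [map_smul]; simp [hvdef, smul_eq_mul]
    obtain ⟨j₀, -, hj₀⟩ := Finset.exists_max_image Finset.univ (fun j => |v j|)
      ⟨⟨0, Nat.pos_of_ne_zero hn⟩, Finset.mem_univ _⟩
    set M := |v j₀| with hMdef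
    have hjM : ∀ j, |v j| ≤ M := fun j => hj₀ j (Finset.mem_univ j)
    have hM0 : 0 ≤ M := abs_nonneg _
    -- the extremal element of B
    set u' : Fin n → ℝ := fun k => if j₀ = k then (if 0 ≤ v j₀ then δ' else -δ') else 0
      with hu'def
    have hu'B : u' ∈ B := by
      have : ∀ k, |u' k| = if j₀ = k then δ' else 0 := by
        intro k
        by_cases h : j₀ = k <;>
          simp [hu'def, h, abs_of_pos hδ'0, abs_of_nonneg, le_of_lt hδ'0] <;>
          split <;> simp [abs_of_pos hδ'0, le_of_lt hδ'0]
      show ∑ j, |u' j| ≤ δ'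
      calc ∑ j, |u' j| = ∑ j, if j₀ = j then δ' else 0 :=
            Finset.sum_congr rfl fun j _ => this j
        _ ≤ δ' := le_of_eq (by simp)
    have hLu' : L u' = δ' * M := by
      rw [hLrep]
      have : ∀ j, u' j * v j = if j₀ = j then δ' * M else 0 := by
        intro j
        by_cases h : j₀ = j
        · subst h
          by_cases h2 : 0 ≤ v j₀
          · simp [hu'def, h2, hMdef, abs_of_nonneg h2]
          · simp [hu'def, h2, hMdef, abs_of_neg (lt_of_not_ge h2)]
        · simp [hu'def, h]
      calc ∑ j, u' j * v j = ∑ j, if j₀ = j then δ' * M else 0 :=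
            Finset.sum_congr rfl fun j _ => this j
        _ = δ' * M := by simp
    have hLt : ∀ t ∈ K, L t ≤ u₀ - δ' * M := by
      intro t ht
      have : L (t + u') < u₀ := hLC _ ⟨t, ht, u', hu'B, rfl⟩
      rw [map_add, hLu'] at this
      linarith
    have hMpos : 0 < M := by
      rcases lt_or_eq_of_le hM0 with h | h
      · exact h
      · exfalso
        have hv0 : ∀ j, v j = 0 := by
          intro j
          have := hjM j
          rw [← h] at this
          exact abs_eq_zero.mp (le_antisymm this (abs_nonneg _))
        have hL0 : ∀ t : Fin n → ℝ, L t = 0 := by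
          intro t; rw [hLrep]; simp [hv0]
        have h1 := hLt t₀ ht₀K
        rw [hL0 t₀, ← h] at h1
        rw [hL0 s] at hLs
        linarith
    set w : Fin n → ℝ := fun j => (ε / M) * v j with hwdef
    have hεM : 0 < ε / M := div_pos hε hMpos
    have hw : ∀ j, |w j| ≤ ε := by
      intro j
      rw [hwdef]
      simp only
      rw [abs_mul, abs_of_pos hεM]
      calc ε / M * |v j| ≤ ε / M * M := mul_le_mul_of_nonneg_left (hjM j) (le_of_lt hεM)
        _ = ε := div_mul_cancel₀ ε (ne_of_gt hMpos)
    have hwL : ∀ t : Fin n → ℝ, ∑ j, w j * t j = (ε / M) * L t := by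
      intro t
      rw [hLrep, Finset.mul_sum]
      exact Finset.sum_congr rfl fun j _ => by rw [hwdef]; ring
    have hfw : f w ≤ (ε / M) * (u₀ - δ' * M) := by
      refine hfub w _ fun t ht => ?_
      rw [hwL]
      exact mul_le_mul_of_nonneg_left (hLt t ht) (le_of_lt hεM)
    have hxS : (∑ j, w j * s j) - f w ∈ S := ⟨w, hw, rfl⟩
    have hxge : ε * δ' ≤ (∑ j, w j * s j) - f w := by
      rw [hwL]
      have h1 : (ε / M) * u₀ ≤ (ε / M) * L s :=
        mul_le_mul_of_nonneg_left (le_of_lt hLs) (le_of_lt hεM)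
      have h2 : (ε / M) * (u₀ - δ' * M) = (ε / M) * u₀ - ε * δ' := by
        field_simp
      nlinarith
    exact hxge.trans (le_csSup hSbdd hxS)
  have hinf : sInf {d : ℝ | ∃ t ∈ K, d = ∑ j, |s j - t j|} = δ := by rw [hDeq]
  rw [hinf]
  refine le_antisymm (csSup_le ⟨0, h0S⟩ hub) ?_
  rcases eq_or_lt_of_le hδ0 with h | h
  · rw [← h, mul_zero]
    exact le_csSup hSbdd h0S
  · refine le_of_forall_lt fun c hc => ?_
    have hcε : c / ε < δ := by
      rw [div_lt_iff₀ hε] at *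
      linarith [hc, mul_comm δ ε]
    set δ' : ℝ := max (δ / 2) ((c / ε + δ) / 2) with hδ'def
    have h1 : 0 < δ' := lt_max_of_lt_left (by linarith)
    have h2 : δ' < δ := max_lt (by linarith) (by linarith)
    have h3 : c / ε < δ' := lt_max_of_lt_right (by linarith)
    have h4 : c < ε * δ' := by
      rw [← div_lt_iff₀' hε]
      exact h3
    exact h4.trans_le (key δ' h1 h2)
end

section
/- Let K₁, …, K_r ⊆ ℝ^n be nonempty compact convex sets with support functions f_i(w) = sup_{t ∈ K_i} ⟨w, t⟩, and let ε > 0. Then strong duality holds: min_{w ∈ [−ε, ε]^n} ( Σ_{i=1}^r f_i(w) + (1/2)‖w‖₂² ) = max_{(t₁, …, t_r) ∈ K₁ × ⋯ × K_r} ( − Σ_{j=1}^n ψ_ε*( Σ_{i=1}^r t_{ij} ) ), where ψ_ε* is the Huber function, and both the minimum and the maximum are attained. -/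
/-- clamp is bounded by ε -/
lemma stmt5_clampAbs (ε : ℝ) (hε : 0 < ε) (s : ℝ) : |max (-ε) (min ε s)| ≤ ε := by
  rw [abs_le]
  exact ⟨le_max_left _ _, max_le (by linarith) (min_le_left _ _)⟩

/-- Huber via clamp -/
lemma stmt5_psi_eq (ε : ℝ) (hε : 0 < ε) (s : ℝ) :
    (if |s| ≤ ε then s^2/2 else ε * |s| - ε^2/2) =
      (max (-ε) (min ε s)) * s - (max (-ε) (min ε s))^2/2 := by
  rcases le_total s (-ε) with h1 | h1
  · have hc : max (-ε) (min ε s) = -ε := by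
      rw [min_eq_right (by linarith), max_eq_left h1]
    have habs : |s| = -s := abs_of_nonpos (by linarith)
    rw [hc, habs]
    split_ifs with h <;> nlinarith
  · rcases le_total ε s with h2 | h2
    · have hc : max (-ε) (min ε s) = ε := by
        rw [min_eq_left h2, max_eq_right (by linarith)]
      have habs : |s| = s := abs_of_nonneg (by linarith)
      rw [hc, habs]
      split_ifs with h <;> nlinarith
    · have hc : max (-ε) (min ε s) = s := by
        rw [min_eq_right h2, max_eq_right h1]
      have habs : |s| ≤ ε := abs_le.mpr ⟨h1, h2⟩
      rw [hc, if_pos habs]; ring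

/-- clamp maximizes u*s - u²/2 over |u| ≤ ε -/
lemma stmt5_clamp_max (ε u s : ℝ) (hu : |u| ≤ ε) :
    u*s - u^2/2 ≤ (max (-ε) (min ε s)) * s - (max (-ε) (min ε s))^2/2 := by
  obtain ⟨hu1, hu2⟩ := abs_le.mp hu
  rcases le_total s (-ε) with h1 | h1
  · rw [min_eq_right (by linarith), max_eq_left h1]; nlinarith
  · rcases le_total ε s with h2 | h2
    · rw [min_eq_left h2, max_eq_right (by linarith)]; nlinarith
    · rw [min_eq_right h2, max_eq_right h1]; nlinarith [sq_nonneg (u - s)]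

/-- clamp is 1-Lipschitz -/
lemma stmt5_clamp_lip (ε a b : ℝ) :
    |max (-ε) (min ε a) - max (-ε) (min ε b)| ≤ |a - b| := by
  have h1 : |max (-ε) (min ε a) - max (-ε) (min ε b)| ≤ |min ε a - min ε b| := by
    rw [max_comm (-ε) (min ε a), max_comm (-ε) (min ε b)]
    exact abs_max_sub_max_le_abs _ _ _
  have h2 : |min ε a - min ε b| ≤ |a - b| := by
    have := abs_min_sub_min_le_max ε a ε b
    simpa using this
  linarith

lemma stmt5_limit (A B : ℝ) (hB : 0 ≤ B) (h : ∀ θ : ℝ, 0 < θ → θ ≤ 1 → 0 ≤ A + θ * B) : 0 ≤ A := by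
  by_contra hA
  push_neg at hA
  rcases eq_or_lt_of_le hB with hB0 | hB0
  · have := h 1 one_pos le_rfl; nlinarith
  · have hθ : (0:ℝ) < min 1 (-A/(2*B)) := lt_min one_pos (div_pos (by linarith) (by linarith))
    have := h _ hθ (min_le_left _ _)
    have h2 : min 1 (-A/(2*B)) ≤ -A/(2*B) := min_le_right _ _
    have h3 : (1 ⊓ (-A/(2*B))) * B ≤ (-A/(2*B)) * B := mul_le_mul_of_nonneg_right h2 hB
    have h4 : (-A/(2*B)) * B = -A/2 := by field_simp
    linarith


/-- Strong duality with attainment: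
`min_{w ∈ [−ε,ε]ⁿ} (Σᵢ fᵢ(w) + ½‖w‖₂²) = max_{(t₁,…,t_r) ∈ K₁×⋯×K_r} −Σⱼ ψ_ε*(Σᵢ t_{ij})`,
where `fᵢ` is the support function of the nonempty compact convex set `Kᵢ` and
`ψ_ε*` is the Huber function. -/
theorem stmt5 (n r : ℕ) (K : Fin r → Set (Fin n → ℝ))
    (hKne : ∀ i, (K i).Nonempty) (hKcomp : ∀ i, IsCompact (K i))
    (hKconv : ∀ i, Convex ℝ (K i))
    (ε : ℝ) (hε : 0 < ε)
    (f : Fin r → (Fin n → ℝ) → ℝ)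
    (hf : ∀ i (w : Fin n → ℝ), f i w = sSup {x : ℝ | ∃ t ∈ K i, x = ∑ j, w j * t j}) :
    ∃ p : ℝ,
      IsLeast {x : ℝ | ∃ w : Fin n → ℝ, (∀ j, |w j| ≤ ε) ∧
        x = (∑ i, f i w) + (1/2) * ∑ j, (w j)^2} p ∧
      IsGreatest {x : ℝ | ∃ t : Fin r → Fin n → ℝ, (∀ i, t i ∈ K i) ∧
        x = - ∑ j, (if |∑ i, t i j| ≤ ε then (∑ i, t i j)^2/2
                    else ε * |∑ i, t i j| - ε^2/2)} p := by
  classical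
  set ψ : ℝ → ℝ := fun s => if |s| ≤ ε then s^2/2 else ε * |s| - ε^2/2 with hψdef
  set c : ℝ → ℝ := fun s => max (-ε) (min ε s) with hcdef
  set T : Set (Fin r → Fin n → ℝ) := Set.univ.pi K with hTdef
  have hTcomp : IsCompact T := isCompact_univ_pi hKcomp
  have hTne : T.Nonempty := ⟨fun i => (hKne i).some, fun i _ => (hKne i).some_mem⟩
  have hψc : Continuous ψ := by
    rw [hψdef]
    apply Continuous.if_le (by continuity) (by continuity) continuous_abs continuous_const
    intro s h
    have h2 : s^2 = ε^2 := by rw [← sq_abs, h]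
    nlinarith
  set D : (Fin r → Fin n → ℝ) → ℝ := fun t => -∑ j, ψ (∑ i, t i j) with hDdef
  have hDc : Continuous D := by
    rw [hDdef]
    apply Continuous.neg
    apply continuous_finset_sum
    intro j _
    exact hψc.comp (continuous_finset_sum _ fun i _ =>
      (continuous_apply j).comp (continuous_apply i))
  obtain ⟨ts, htsT, htsmax⟩ := hTcomp.exists_isMaxOn hTne hDc.continuousOn
  have htsK : ∀ i, ts i ∈ K i := fun i => htsT i (Set.mem_univ i)
  set s : Fin n → ℝ := fun j => ∑ i, ts i j with hsdef
  set w : Fin n → ℝ := fun j => -(c (s j)) with hwdef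
  have hwfeas : ∀ j, |w j| ≤ ε := fun j => by
    rw [hwdef]
    simpa [abs_neg] using stmt5_clampAbs ε hε (s j)
  -- key first-order optimality
  have hkey : ∀ i, ∀ tt ∈ K i, ∑ j, w j * tt j ≤ ∑ j, w j * ts i j := by
    intro i tt htt
    set d : Fin n → ℝ := fun j => tt j - ts i j with hddef
    have hA : 0 ≤ ∑ j, d j * c (s j) := by
      apply stmt5_limit _ (∑ j, (d j)^2) (Finset.sum_nonneg fun j _ => sq_nonneg _)
      intro θ hθ hθ1
      set tθ : Fin r → Fin n → ℝ := Function.update ts i (fun j => ts i j + θ * d j) with htθdef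
      have htθT : tθ ∈ T := by
        intro i' _
        rcases eq_or_ne i' i with rfl | hne
        · rw [htθdef, Function.update_self]
          have heq : (fun j => ts i' j + θ * d j) = (1 - θ) • ts i' + θ • tt := by
            funext j; simp only [hddef, Pi.add_apply, Pi.smul_apply, smul_eq_mul]; ring
          rw [heq]
          exact hKconv i' (htsK i') htt (by linarith) hθ.le (by ring)
        · rw [htθdef, Function.update_of_ne hne]; exact htsK i'
      have hsum : ∀ j, ∑ i', tθ i' j = s j + θ * d j := by
        intro j
        have h1 : ∀ i' : Fin r, tθ i' j = ts i' j + (if i' = i then θ * d j else 0) := by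
          intro i'
          rcases eq_or_ne i' i with rfl | hne
          · simp [htθdef, Function.update_self]
          · simp [htθdef, Function.update_of_ne hne, hne]
        rw [Finset.sum_congr rfl fun i' _ => h1 i', Finset.sum_add_distrib,
          Finset.sum_ite_eq' Finset.univ i]
        simp [hsdef]
      have hopt : ∑ j, ψ (s j) ≤ ∑ j, ψ (s j + θ * d j) := by
        have h0 : D tθ ≤ D ts := htsmax htθT
        have h1 : D tθ = -∑ j, ψ (s j + θ * d j) := by
          rw [hDdef]
          simp only
          congr 1
          exact Finset.sum_congr rfl fun j _ => by rw [hsum j]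
        have h2 : D ts = -∑ j, ψ (s j) := rfl
        rw [h1, h2] at h0
        linarith
      have hgrad : ∀ j, ψ (s j + θ * d j) - θ * d j * c (s j + θ * d j) ≤ ψ (s j) := by
        intro j
        have e1 : ψ (s j + θ * d j) = c (s j + θ * d j) * (s j + θ * d j)
            - (c (s j + θ * d j))^2/2 := stmt5_psi_eq ε hε _
        have e2 : ψ (s j) = c (s j) * (s j) - (c (s j))^2/2 := stmt5_psi_eq ε hε _
        have e3 : c (s j + θ * d j) * (s j) - (c (s j + θ * d j))^2/2
            ≤ c (s j) * (s j) - (c (s j))^2/2 :=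
          stmt5_clamp_max ε _ _ (stmt5_clampAbs ε hε _)
        calc ψ (s j + θ * d j) - θ * d j * c (s j + θ * d j)
            = c (s j + θ * d j) * (s j) - (c (s j + θ * d j))^2/2 := by rw [e1]; ring
          _ ≤ c (s j) * (s j) - (c (s j))^2/2 := e3
          _ = ψ (s j) := e2.symm
      have h5 : ∑ j, (ψ (s j + θ * d j) - θ * (d j * c (s j + θ * d j))) ≤ ∑ j, ψ (s j) :=
        Finset.sum_le_sum fun j _ => by have := hgrad j; linarith [this]
      rw [Finset.sum_sub_distrib, ← Finset.mul_sum] at h5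
      have h7 : 0 ≤ ∑ j, d j * c (s j + θ * d j) := by
        by_contra hcon
        push_neg at hcon
        nlinarith [hopt, h5]
      have h8 : ∀ j, d j * c (s j + θ * d j) ≤ d j * c (s j) + θ * (d j)^2 := by
        intro j
        have hl := stmt5_clamp_lip ε (s j + θ * d j) (s j)
        have hl2 : |c (s j + θ * d j) - c (s j)| ≤ θ * |d j| := by
          rw [hcdef]
          calc |max (-ε) (min ε (s j + θ * d j)) - max (-ε) (min ε (s j))|
              ≤ |(s j + θ * d j) - s j| := stmt5_clamp_lip ε _ _
            _ = θ * |d j| := by rw [show (s j + θ * d j) - s j = θ * d j by ring,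
                abs_mul, abs_of_pos hθ]
        obtain ⟨hl3, hl4⟩ := abs_le.mp hl2
        rcases le_total 0 (d j) with hd | hd
        · have habs : |d j| = d j := abs_of_nonneg hd
          rw [habs] at hl3 hl4
          nlinarith
        · have habs : |d j| = -(d j) := abs_of_nonpos hd
          rw [habs] at hl3 hl4
          nlinarith
      calc (0:ℝ) ≤ ∑ j, d j * c (s j + θ * d j) := h7
        _ ≤ ∑ j, (d j * c (s j) + θ * (d j)^2) := Finset.sum_le_sum fun j _ => h8 j
        _ = (∑ j, d j * c (s j)) + θ * ∑ j, (d j)^2 := by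
            rw [Finset.sum_add_distrib, Finset.mul_sum]
    have hexp : ∑ j, d j * c (s j) = (∑ j, w j * ts i j) - (∑ j, w j * tt j) := by
      rw [← Finset.sum_sub_distrib]
      refine Finset.sum_congr rfl fun j _ => ?_
      rw [hwdef, hddef]
      ring
    rw [hexp] at hA
    linarith
  -- set descriptions
  have hSet : ∀ (i : Fin r) (v : Fin n → ℝ),
      {x : ℝ | ∃ t ∈ K i, x = ∑ j, v j * t j} = (fun t => ∑ j, v j * t j) '' K i := by
    intro i v; ext x; simp [eq_comm]
  have hcont : ∀ v : Fin n → ℝ, Continuous (fun t : Fin n → ℝ => ∑ j, v j * t j) :=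
    fun v => continuous_finset_sum _ fun j _ => (continuous_const.mul (continuous_apply j))
  have hfw : ∀ i, f i w = ∑ j, w j * ts i j := by
    intro i
    rw [hf, hSet]
    apply IsGreatest.csSup_eq
    exact ⟨⟨ts i, htsK i, rfl⟩, by rintro x ⟨t, htK, rfl⟩; exact hkey i t htK⟩
  have hwsum : ∑ i, f i w = ∑ j, w j * s j := by
    rw [Finset.sum_congr rfl fun i _ => hfw i, Finset.sum_comm]
    refine Finset.sum_congr rfl fun j _ => ?_
    rw [← Finset.mul_sum, hsdef]
  have hptwise : ∀ j, w j * s j + (1/2) * (w j)^2 = -ψ (s j) := by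
    intro j
    have e : ψ (s j) = c (s j) * (s j) - (c (s j))^2/2 := stmt5_psi_eq ε hε _
    rw [e, hwdef]
    ring
  have hpw : (∑ i, f i w) + (1/2) * ∑ j, (w j)^2 = -∑ j, ψ (s j) := by
    have h3 : ∑ j, (w j * s j + (1/2) * (w j)^2) = ∑ j, -ψ (s j) :=
      Finset.sum_congr rfl fun j _ => hptwise j
    rw [Finset.sum_add_distrib, ← Finset.mul_sum, Finset.sum_neg_distrib] at h3
    rw [hwsum]
    linarith
  refine ⟨-∑ j, ψ (s j), ⟨⟨w, hwfeas, hpw.symm⟩, ?_⟩, ⟨ts, htsK, ?_⟩, ?_⟩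
  · -- lower bound (weak duality)
    rintro x ⟨v, hvfeas, rfl⟩
    have hbdd : ∀ i : Fin r, BddAbove {x : ℝ | ∃ t ∈ K i, x = ∑ j, v j * t j} := by
      intro i; rw [hSet]
      exact ((hKcomp i).image (hcont v)).bddAbove
    have hge : ∀ i, ∑ j, v j * ts i j ≤ f i v := by
      intro i
      rw [hf]
      exact le_csSup (hbdd i) ⟨ts i, htsK i, rfl⟩
    have h1 : ∑ j, v j * s j ≤ ∑ i, f i v := by
      calc ∑ j, v j * s j = ∑ i, ∑ j, v j * ts i j := by
            rw [Finset.sum_comm]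
            refine Finset.sum_congr rfl fun j _ => ?_
            rw [← Finset.mul_sum, hsdef]
        _ ≤ ∑ i, f i v := Finset.sum_le_sum fun i _ => hge i
    have h2 : ∀ j, -ψ (s j) ≤ v j * s j + (1/2) * (v j)^2 := by
      intro j
      have e := stmt5_clamp_max ε (-(v j)) (s j) (by rw [abs_neg]; exact hvfeas j)
      have e2 : ψ (s j) = c (s j) * (s j) - (c (s j))^2/2 := stmt5_psi_eq ε hε _
      nlinarith [e, e2]
    have h3 : ∑ j, -ψ (s j) ≤ ∑ j, (v j * s j + (1/2) * (v j)^2) :=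
      Finset.sum_le_sum fun j _ => h2 j
    rw [Finset.sum_neg_distrib, Finset.sum_add_distrib, ← Finset.mul_sum] at h3
    linarith
  · -- dual membership
    rw [hψdef, hsdef]
  · -- dual upper bound
    rintro x ⟨t, htK, rfl⟩
    have h0 : D t ≤ D ts := htsmax (fun i _ => htK i)
    rw [hDdef] at h0
    simp only at h0
    rw [hψdef] at h0
    exact h0
end

section
/- Let K₁, …, K_r ⊆ ℝ^n be nonempty compact convex sets with support functions f_i(w) = sup_{t ∈ K_i} ⟨w, t⟩, and let ε > 0. Then min_{w ∈ [−ε, ε]^n} ( Σ_{i=1}^r f_i(w) + (1/2)‖w‖₂² ) = sup_{(s₁, …, s_r) ∈ (ℝ^n)^r} ( − Σ_{i=1}^r ε · min_{t_i ∈ K_i} ‖s_i − t_i‖₁ − (1/2)‖ Σ_{i=1}^r s_i ‖₂² ), and the supremum is attained. -/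
/-!
Let `T ∈ ∏ i, K i` minimise the Huber loss `t ↦ ∑ j, huber ε ((∑ i, t i) j)`, put `A = ∑ i, T i`
and `W = -clip ε ∘ A`. Since `-huber ε x = min_{|v| ≤ ε} (v x + v² / 2)`, every `w` in the box has
primal value at least `-huberSum ε A`. Because the loss is `1`-smooth with gradient `clip ε ∘ A`,
the first-order condition at `T` says that `A` maximises `⟨W, ·⟩` on `∑ i, K i`, so the primal
value of `W` is exactly `-huberSum ε A`. Weak duality comes from `⟨w, s - t⟩ ≤ ε ‖s - t‖₁` and
`-½‖u‖² - ⟨w, u⟩ ≤ ½‖w‖²`. Finally, since `huber ε` is the Moreau envelope of `ε |·|`, shifting a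
single block `T i₀` by `A - clip ε ∘ A` gives a dual point of value `-huberSum ε A`.
-/

open Set Filter Topology

theorem IsMinOn.nonneg_of_le_add_mul_add_sq {E : Type*} [AddCommGroup E] [Module ℝ E]
    {C : Set E} {g : E → ℝ} {x y : E} {P Q : ℝ} (hC : Convex ℝ C) (hmin : IsMinOn g C x)
    (hx : x ∈ C) (hy : y ∈ C) (hg : ∀ τ : ℝ, g (x + τ • (y - x)) ≤ g x + τ * P + τ ^ 2 * Q) :
    0 ≤ P := by
  have hτ : ∀ᶠ τ in 𝓝[>] (0 : ℝ), 0 ≤ P + τ * Q := by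
    filter_upwards [Ioc_mem_nhdsGT zero_lt_one] with τ ⟨hτ₀, hτ₁⟩
    have := (hmin (hC.add_smul_sub_mem hx hy ⟨hτ₀.le, hτ₁⟩)).trans (hg τ)
    nlinarith
  have hlim : Tendsto (fun τ : ℝ => P + τ * Q) (𝓝[>] 0) (𝓝 P) := by
    have hcont : Continuous fun τ : ℝ => P + τ * Q := by fun_prop
    simpa using (hcont.tendsto 0).mono_left nhdsWithin_le_nhds
  exact ge_of_tendsto hlim hτ

noncomputable def clip (ε x : ℝ) : ℝ := max (-ε) (min ε x)

/-- The Huber loss: `-huber ε x = min_{|v| ≤ ε} (v * x + v ^ 2 / 2)`, attained at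
`v = -clip ε x`. -/
noncomputable def huber (ε x : ℝ) : ℝ := clip ε x * x - clip ε x ^ 2 / 2

section Scalar

variable {ε : ℝ}

lemma clip_trichotomy (hε : 0 ≤ ε) (x : ℝ) :
    (x ≤ -ε ∧ clip ε x = -ε) ∨ (|x| ≤ ε ∧ clip ε x = x) ∨ (ε ≤ x ∧ clip ε x = ε) := by
  unfold clip
  rcases le_total x (-ε) with h | h
  · exact Or.inl ⟨h, by rw [min_eq_right (by linarith), max_eq_left h]⟩
  rcases le_total ε x with h' | h'
  · exact Or.inr (Or.inr ⟨h', by rw [min_eq_left h', max_eq_right (by linarith)]⟩)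
  · exact Or.inr (Or.inl ⟨abs_le.2 ⟨h, h'⟩, by rw [min_eq_right h', max_eq_right h]⟩)

lemma abs_clip_le (hε : 0 ≤ ε) (x : ℝ) : |clip ε x| ≤ ε := by
  rcases clip_trichotomy hε x with ⟨-, h⟩ | ⟨hx, h⟩ | ⟨-, h⟩ <;> rw [h]
  · rw [abs_neg, abs_of_nonneg hε]
  · exact hx
  · rw [abs_of_nonneg hε]

lemma continuous_clip (ε : ℝ) : Continuous (clip ε) :=
  continuous_const.max (continuous_const.min continuous_id)

lemma continuous_huber (ε : ℝ) : Continuous (huber ε) :=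
  ((continuous_clip ε).mul continuous_id).sub ((continuous_clip ε).pow 2 |>.div_const 2)

lemma huber_zero (hε : 0 ≤ ε) : huber ε 0 = 0 := by
  simp [huber, clip, hε]

lemma neg_huber_le {v : ℝ} (hv : |v| ≤ ε) (x : ℝ) : -huber ε x ≤ v * x + v ^ 2 / 2 := by
  obtain ⟨hv₁, hv₂⟩ := abs_le.1 hv
  rcases clip_trichotomy ((abs_nonneg v).trans hv) x with ⟨hx, h⟩ | ⟨-, h⟩ | ⟨hx, h⟩ <;>
    rw [huber, h]
  · nlinarith [mul_nonneg (sub_nonneg.2 hv₂) (by linarith : 0 ≤ -x - (v + ε) / 2)]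
  · nlinarith [sq_nonneg (v + x)]
  · nlinarith [mul_nonneg (by linarith : 0 ≤ v + ε) (by linarith : 0 ≤ x + (v - ε) / 2)]

/-- `huber ε` is `1`-smooth, with derivative `clip ε`. -/
lemma huber_le_add (hε : 0 ≤ ε) (a b : ℝ) :
    huber ε b ≤ huber ε a + clip ε a * (b - a) + (b - a) ^ 2 / 2 := by
  rcases clip_trichotomy hε a with ⟨ha, h⟩ | ⟨ha, h⟩ | ⟨ha, h⟩ <;>
  rcases clip_trichotomy hε b with ⟨hb, h'⟩ | ⟨hb, h'⟩ | ⟨hb, h'⟩ <;>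
  rw [huber, huber, h, h'] <;>
  (try obtain ⟨ha₁, ha₂⟩ := abs_le.1 ha) <;> (try obtain ⟨hb₁, hb₂⟩ := abs_le.1 hb) <;>
    nlinarith [sq_nonneg (a - b), sq_nonneg (a + b), sq_nonneg (a - b - 2 * ε),
      sq_nonneg (a - b + 2 * ε)]

/-- `huber ε` is the Moreau envelope of `ε * |·|`, the infimum being attained at `x - clip ε x`. -/
lemma huber_eq_mul_abs_add (hε : 0 ≤ ε) (x : ℝ) :
    huber ε x = ε * |x - clip ε x| + clip ε x ^ 2 / 2 := by
  rcases clip_trichotomy hε x with ⟨hx, h⟩ | ⟨-, h⟩ | ⟨hx, h⟩ <;> rw [huber, h]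
  · rw [abs_of_nonpos (by linarith)]; ring
  · simp; ring
  · rw [abs_of_nonneg (by linarith)]; ring

end Scalar

section Vector

variable {ι : Type*} [Fintype ι] {ε : ℝ}

noncomputable def huberSum (ε : ℝ) (a : ι → ℝ) : ℝ := ∑ j, huber ε (a j)

lemma continuous_huberSum (ε : ℝ) : Continuous (huberSum (ι := ι) ε) :=
  continuous_finsetSum _ fun j _ => (continuous_huber ε).comp (continuous_apply j)

lemma neg_huberSum_le {w : ι → ℝ} (hw : ∀ j, |w j| ≤ ε) (a : ι → ℝ) :
    -huberSum ε a ≤ w ⬝ᵥ a + (1 / 2) * ∑ j, w j ^ 2 := by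
  rw [huberSum, dotProduct, Finset.mul_sum, ← Finset.sum_add_distrib, ← Finset.sum_neg_distrib]
  refine Finset.sum_le_sum fun j _ => ?_
  linarith [neg_huber_le (hw j) (a j)]

lemma neg_huberSum_eq (a : ι → ℝ) :
    -huberSum ε a = -(clip ε ∘ a) ⬝ᵥ a + (1 / 2) * ∑ j, (-(clip ε ∘ a)) j ^ 2 := by
  simp only [huberSum, huber, dotProduct, Finset.mul_sum, ← Finset.sum_add_distrib,
    ← Finset.sum_neg_distrib]
  exact Finset.sum_congr rfl fun j _ => by simp only [Pi.neg_apply, Function.comp_apply]; ring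

lemma huberSum_add_smul_le (hε : 0 ≤ ε) (a d : ι → ℝ) (τ : ℝ) :
    huberSum ε (a + τ • d) ≤
      huberSum ε a + τ * ((clip ε ∘ a) ⬝ᵥ d) + τ ^ 2 * ((1 / 2) * ∑ j, d j ^ 2) := by
  calc huberSum ε (a + τ • d) = ∑ j, huber ε (a j + τ * d j) := rfl
    _ ≤ ∑ j, (huber ε (a j) + clip ε (a j) * (τ * d j) + (τ * d j) ^ 2 / 2) :=
      Finset.sum_le_sum fun j _ => by simpa using huber_le_add hε (a j) (a j + τ * d j)
    _ = _ := by
      simp only [huberSum, dotProduct, Function.comp_apply, Finset.mul_sum,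
        ← Finset.sum_add_distrib]
      exact Finset.sum_congr rfl fun j _ => by ring

lemma huberSum_eq_sum_abs_add (hε : 0 ≤ ε) (a : ι → ℝ) :
    huberSum ε a = ε * ∑ j, |a j - clip ε (a j)| + (1 / 2) * ∑ j, clip ε (a j) ^ 2 := by
  simp only [huberSum, huber_eq_mul_abs_add hε, Finset.mul_sum, ← Finset.sum_add_distrib]
  exact Finset.sum_congr rfl fun j _ => by ring

lemma dotProduct_le_mul_sum_abs {w : ι → ℝ} (hw : ∀ j, |w j| ≤ ε) (v : ι → ℝ) :
    w ⬝ᵥ v ≤ ε * ∑ j, |v j| := by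
  rw [dotProduct, Finset.mul_sum]
  refine Finset.sum_le_sum fun j _ => ?_
  calc w j * v j ≤ |w j| * |v j| := by rw [← abs_mul]; exact le_abs_self _
    _ ≤ ε * |v j| := mul_le_mul_of_nonneg_right (hw j) (abs_nonneg _)

end Vector

section Support

variable {ι : Type*} [Fintype ι] {K : Set (ι → ℝ)}

noncomputable def supportFun (K : Set (ι → ℝ)) (w : ι → ℝ) : ℝ :=
  sSup {x | ∃ t ∈ K, x = w ⬝ᵥ t}

noncomputable def l1InfDist (s : ι → ℝ) (K : Set (ι → ℝ)) : ℝ :=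
  sInf {d | ∃ t ∈ K, d = ∑ j, |s j - t j|}

lemma IsCompact.isGreatest_supportFun (hK : IsCompact K) (hne : K.Nonempty) (w : ι → ℝ) :
    IsGreatest {x | ∃ t ∈ K, x = w ⬝ᵥ t} (supportFun K w) := by
  have himage : {x | ∃ t ∈ K, x = w ⬝ᵥ t} = (w ⬝ᵥ ·) '' K := by
    ext x
    simp [eq_comm]
  rw [supportFun, himage]
  exact (hK.image (continuous_const.dotProduct continuous_id)).isGreatest_sSup (hne.image _)

lemma IsCompact.dotProduct_le_supportFun (hK : IsCompact K) {t : ι → ℝ} (ht : t ∈ K)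
    (w : ι → ℝ) : w ⬝ᵥ t ≤ supportFun K w :=
  (hK.isGreatest_supportFun ⟨t, ht⟩ w).2 ⟨t, ht, rfl⟩

lemma IsCompact.exists_supportFun_eq (hK : IsCompact K) (hne : K.Nonempty) (w : ι → ℝ) :
    ∃ t ∈ K, supportFun K w = w ⬝ᵥ t :=
  (hK.isGreatest_supportFun hne w).1

lemma l1InfDist_le (s : ι → ℝ) {t : ι → ℝ} (ht : t ∈ K) : l1InfDist s K ≤ ∑ j, |s j - t j| :=
  csInf_le ⟨0, by rintro _ ⟨t, -, rfl⟩; positivity⟩ ⟨t, ht, rfl⟩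

lemma dotProduct_sub_supportFun_le {ε : ℝ} (hε : 0 < ε) (hK : IsCompact K) (hne : K.Nonempty)
    {w : ι → ℝ} (hw : ∀ j, |w j| ≤ ε) (s : ι → ℝ) :
    w ⬝ᵥ s - supportFun K w ≤ ε * l1InfDist s K := by
  rw [← div_le_iff₀' hε]
  obtain ⟨t₀, ht₀⟩ := hne
  refine le_csInf ⟨_, t₀, ht₀, rfl⟩ ?_
  rintro _ ⟨t, ht, rfl⟩
  rw [div_le_iff₀' hε]
  have := dotProduct_le_mul_sum_abs hw (s - t)
  simp only [dotProduct_sub, Pi.sub_apply] at this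
  linarith [hK.dotProduct_le_supportFun ht w]

end Support

section Duality

variable {ι κ : Type*} [Fintype ι] [Fintype κ] {K : κ → Set (ι → ℝ)} {ε : ℝ}

noncomputable def primalValue (K : κ → Set (ι → ℝ)) (w : ι → ℝ) : ℝ :=
  (∑ i, supportFun (K i) w) + (1 / 2) * ∑ j, (w j) ^ 2

noncomputable def dualValue (ε : ℝ) (K : κ → Set (ι → ℝ)) (s : κ → ι → ℝ) : ℝ :=
  -(∑ i, ε * l1InfDist (s i) (K i)) - (1 / 2) * ∑ j, (∑ i, s i j) ^ 2

lemma neg_huberSum_sum_le_primalValue (hK : ∀ i, IsCompact (K i)) {T : κ → ι → ℝ}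
    (hT : ∀ i, T i ∈ K i) {w : ι → ℝ} (hw : ∀ j, |w j| ≤ ε) :
    -huberSum ε (∑ i, T i) ≤ primalValue K w := by
  have hsupp : w ⬝ᵥ ∑ i, T i ≤ ∑ i, supportFun (K i) w := by
    rw [dotProduct_sum]
    exact Finset.sum_le_sum fun i _ => (hK i).dotProduct_le_supportFun (hT i) w
  rw [primalValue]
  linarith [neg_huberSum_le hw (∑ i, T i)]

lemma neg_half_sum_sq_sub_dotProduct_le (w u : ι → ℝ) :
    -(1 / 2) * ∑ j, u j ^ 2 - w ⬝ᵥ u ≤ (1 / 2) * ∑ j, w j ^ 2 := by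
  simp only [dotProduct, Finset.mul_sum, ← Finset.sum_sub_distrib]
  exact Finset.sum_le_sum fun j _ => by nlinarith [sq_nonneg (w j + u j)]

lemma dualValue_le_primalValue (hε : 0 < ε) (hne : ∀ i, (K i).Nonempty)
    (hK : ∀ i, IsCompact (K i)) {w : ι → ℝ} (hw : ∀ j, |w j| ≤ ε) (s : κ → ι → ℝ) :
    dualValue ε K s ≤ primalValue K w := by
  have hblocks : w ⬝ᵥ ∑ i, s i - ∑ i, supportFun (K i) w ≤ ∑ i, ε * l1InfDist (s i) (K i) := by
    rw [dotProduct_sum, ← Finset.sum_sub_distrib]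
    exact Finset.sum_le_sum fun i _ => dotProduct_sub_supportFun_le hε (hK i) (hne i) hw (s i)
  have hsq := neg_half_sum_sq_sub_dotProduct_le w (∑ i, s i)
  simp only [Finset.sum_apply] at hsq
  rw [dualValue, primalValue]
  linarith

lemma dotProduct_sum_le_of_isMinOn (hε : 0 ≤ ε) (hK : ∀ i, Convex ℝ (K i))
    {T t : κ → ι → ℝ} (hT : T ∈ univ.pi K) (ht : t ∈ univ.pi K)
    (hmin : IsMinOn (fun t => huberSum ε (∑ i, t i)) (univ.pi K) T) :
    -(clip ε ∘ ∑ i, T i) ⬝ᵥ ∑ i, t i ≤ -(clip ε ∘ ∑ i, T i) ⬝ᵥ ∑ i, T i := by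
  have hsegment (τ : ℝ) :
      ∑ i, (T + τ • (t - T)) i = ∑ i, T i + τ • (∑ i, t i - ∑ i, T i) := by
    simp only [Pi.add_apply, Pi.smul_apply, Pi.sub_apply, Finset.sum_add_distrib,
      ← Finset.smul_sum, Finset.sum_sub_distrib]
  have := hmin.nonneg_of_le_add_mul_add_sq (convex_pi fun i _ => hK i) hT ht fun τ => by
    simpa only [hsegment] using huberSum_add_smul_le hε (∑ i, T i) (∑ i, t i - ∑ i, T i) τ
  rw [dotProduct_sub] at this
  simp only [neg_dotProduct]
  linarith

lemma primalValue_eq_neg_huberSum_of_isMinOn (hε : 0 ≤ ε) (hne : ∀ i, (K i).Nonempty)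
    (hK : ∀ i, IsCompact (K i)) (hKconv : ∀ i, Convex ℝ (K i)) {T : κ → ι → ℝ}
    (hT : T ∈ univ.pi K) (hmin : IsMinOn (fun t => huberSum ε (∑ i, t i)) (univ.pi K) T) :
    primalValue K (-(clip ε ∘ ∑ i, T i)) = -huberSum ε (∑ i, T i) := by
  set W := -(clip ε ∘ ∑ i, T i)
  have hsupp : ∑ i, supportFun (K i) W = W ⬝ᵥ ∑ i, T i := by
    refine le_antisymm ?_ ?_
    · choose t htK ht using fun i => (hK i).exists_supportFun_eq (hne i) W
      rw [Finset.sum_congr rfl fun i _ => ht i, ← dotProduct_sum]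
      exact dotProduct_sum_le_of_isMinOn hε hKconv hT (mem_univ_pi.2 htK) hmin
    · rw [dotProduct_sum]
      exact Finset.sum_le_sum fun i _ => (hK i).dotProduct_le_supportFun (hT i (mem_univ i)) W
  rw [primalValue, hsupp, neg_huberSum_eq]

lemma exists_neg_huberSum_le_dualValue (hε : 0 ≤ ε) {T : κ → ι → ℝ} (hT : ∀ i, T i ∈ K i) :
    ∃ s, -huberSum ε (∑ i, T i) ≤ dualValue ε K s := by
  classical
  rcases isEmpty_or_nonempty κ with _ | ⟨⟨i₀⟩⟩
  · exact ⟨T, by simp [dualValue, huberSum, huber_zero hε]⟩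
  set A := ∑ i, T i
  set c := A - clip ε ∘ A
  set s : κ → ι → ℝ := T - Pi.single i₀ c
  refine ⟨s, ?_⟩
  have hsum : ∀ j, ∑ i, s i j = clip ε (A j) := fun j => by
    simp only [s, Pi.sub_apply, Finset.sum_sub_distrib]
    rw [← Finset.sum_apply j _ (Pi.single i₀ c), Fintype.sum_pi_single']
    simp [c, A]
  have hdist : ∑ i, ε * l1InfDist (s i) (K i) ≤ ε * ∑ j, |c j| := by
    calc ∑ i, ε * l1InfDist (s i) (K i)
        ≤ ∑ i, ε * ∑ j, |s i j - T i j| :=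
          Finset.sum_le_sum fun i _ => mul_le_mul_of_nonneg_left (l1InfDist_le _ (hT i)) hε
      _ = ε * ∑ j, |c j| := by
          rw [← Finset.mul_sum, Finset.sum_eq_single i₀ (fun i _ hi => by simp [s, hi]) (by simp)]
          simp [s]
  rw [dualValue, huberSum_eq_sum_abs_add hε]
  simp only [hsum]
  simp only [c, Pi.sub_apply, Function.comp_apply] at hdist
  linarith

end Duality

/-- Dual formulation via `ℓ¹`-distances:
`min_{w ∈ [−ε,ε]ⁿ} (Σᵢ fᵢ(w) + ½‖w‖₂²)
  = sup_{(s₁,…,s_r)} ( −Σᵢ ε · min_{tᵢ ∈ Kᵢ} ‖sᵢ − tᵢ‖₁ − ½‖Σᵢ sᵢ‖₂² )`,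
and the supremum is attained. -/
theorem stmt6 (n r : ℕ) (K : Fin r → Set (Fin n → ℝ))
    (hKne : ∀ i, (K i).Nonempty) (hKcomp : ∀ i, IsCompact (K i))
    (hKconv : ∀ i, Convex ℝ (K i))
    (ε : ℝ) (hε : 0 < ε)
    (f : Fin r → (Fin n → ℝ) → ℝ)
    (hf : ∀ i (w : Fin n → ℝ), f i w = sSup {x : ℝ | ∃ t ∈ K i, x = ∑ j, w j * t j}) :
    ∃ p : ℝ,
      IsLeast {x : ℝ | ∃ w : Fin n → ℝ, (∀ j, |w j| ≤ ε) ∧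
        x = (∑ i, f i w) + (1/2) * ∑ j, (w j)^2} p ∧
      IsGreatest {x : ℝ | ∃ s : Fin r → Fin n → ℝ,
        x = - (∑ i, ε * sInf {d : ℝ | ∃ t ∈ K i, d = ∑ j, |s i j - t j|})
            - (1/2) * ∑ j, (∑ i, s i j)^2} p := by
  obtain rfl : f = fun i => supportFun (K i) := funext fun i => funext (hf i)
  have hcont : Continuous fun t : Fin r → Fin n → ℝ => huberSum ε (∑ i, t i) :=
    (continuous_huberSum ε).comp (continuous_finsetSum _ fun i _ => continuous_apply i)
  obtain ⟨T, hT, hmin⟩ :=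
    (isCompact_univ_pi hKcomp).exists_isMinOn (univ_pi_nonempty_iff.2 hKne) hcont.continuousOn
  have hTK : ∀ i, T i ∈ K i := fun i => hT i (mem_univ i)
  set W := -(clip ε ∘ ∑ i, T i)
  have hW : ∀ j, |W j| ≤ ε := fun j => by simpa [W] using abs_clip_le hε.le _
  have hWval := primalValue_eq_neg_huberSum_of_isMinOn hε.le hKne hKcomp hKconv hT hmin
  have hweak := fun s => hWval ▸ dualValue_le_primalValue hε hKne hKcomp hW s
  refine ⟨-huberSum ε (∑ i, T i), ⟨⟨W, hW, hWval.symm⟩, ?_⟩, ?_, ?_⟩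
  · rintro _ ⟨w, hw, rfl⟩
    exact neg_huberSum_sum_le_primalValue hKcomp hTK hw
  · obtain ⟨s, hs⟩ := exists_neg_huberSum_le_dualValue hε.le hTK
    exact ⟨s, le_antisymm hs (hweak s)⟩
  · rintro _ ⟨s, rfl⟩
    exact hweak s
end

section
/- Let F be a normalized submodular set function on a finite set V. Then for any two elements s, t of the base polytope B(F), ‖s − t‖₂² ≤ Σ_{j ∈ V} ( F({j}) + F(V \ {j}) − F(V) )²; in particular the squared Euclidean diameter of B(F) is at most Δ² = Σ_{j ∈ V} ( F({j}) + F(V \ {j}) − F(V) )². -/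
open Finset

/-- For a normalized submodular `F`, any two points `s, t` of the
base polytope satisfy `‖s − t‖₂² ≤ Σ_j (F({j}) + F(V∖{j}) − F(V))²`, bounding
the squared Euclidean diameter of `B(F)`. -/
theorem stmt7 {V : Type*} [Fintype V] [DecidableEq V]
    (F : Finset V → ℝ)
    (hsub : ∀ A B : Finset V, F (A ∪ B) + F (A ∩ B) ≤ F A + F B)
    (hnorm : F ∅ = 0)
    (s t : V → ℝ)
    (hs : (∑ j, s j) = F Finset.univ ∧ ∀ A : Finset V, (∑ j ∈ A, s j) ≤ F A)
    (ht : (∑ j, t j) = F Finset.univ ∧ ∀ A : Finset V, (∑ j ∈ A, t j) ≤ F A) :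
    (∑ j, (s j - t j)^2) ≤
      ∑ j, (F {j} + F (Finset.univ \ {j}) - F Finset.univ)^2 := by
  apply Finset.sum_le_sum
  intro j _
  have hsplit : ∀ u : V → ℝ, (∑ i, u i) = u j + ∑ i ∈ Finset.univ \ {j}, u i := by
    intro u
    rw [Finset.sdiff_singleton_eq_erase, Finset.add_sum_erase _ u (Finset.mem_univ j)]
  -- bounds for s j
  have hs1 : s j ≤ F {j} := by simpa using hs.2 {j}
  have hs2 : F Finset.univ - F (Finset.univ \ {j}) ≤ s j := by
    have := hs.2 (Finset.univ \ {j})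
    have h := hsplit s
    rw [hs.1] at h
    linarith
  have ht1 : t j ≤ F {j} := by simpa using ht.2 {j}
  have ht2 : F Finset.univ - F (Finset.univ \ {j}) ≤ t j := by
    have := ht.2 (Finset.univ \ {j})
    have h := hsplit t
    rw [ht.1] at h
    linarith
  nlinarith [sq_nonneg (s j - t j), sq_nonneg (F {j} + F (Finset.univ \ {j}) - F Finset.univ)]
end

section
/- Let F be a normalized submodular set function on a finite set V with n elements, f its Lovász extension (the support function of B(F)), and ε > 0. Let w ∈ [−ε, ε]^V, let s ∈ B(F), and set η_C = f(w) + (1/2)‖w‖₂² + Σ_{j∈V} ψ_ε*(s_j), where ψ_ε* is the Huber function. Then for every c ∈ (0, ε] there exists α ∈ [−c, c] such that F({ j ∈ V : w_j ≥ α }) − Σ_{j∈V} min(s_j, 0) ≤ η_C/(2c) + c·n. -/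
open Finset

private lemma clamp_step_mono {c a b : ℝ} (hab : a ≤ b) :
    a - (max (-c) (min c a) + c) ≤ b - (max (-c) (min c b) + c) := by
  simp only [min_def, max_def]
  split_ifs <;> linarith

private lemma huber_fenchel {ε s u : ℝ} (hε : 0 < ε) (hu : |u| ≤ ε) :
    s * u - u^2/2 ≤ (if |s| ≤ ε then s^2/2 else ε*|s| - ε^2/2) := by
  have h1 : s * u ≤ |s| * |u| := by
    calc s * u ≤ |s * u| := le_abs_self _
    _ = |s| * |u| := abs_mul s u
  split_ifs with h
  · nlinarith [sq_nonneg (s - u), sq_nonneg (|s| - |u|), abs_nonneg s, abs_nonneg u,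
      sq_abs s, sq_abs u]
  · have hs : ε ≤ |s| := le_of_not_ge h
    nlinarith [mul_nonneg (sub_nonneg.2 hs) (sub_nonneg.2 hu), sq_nonneg (ε - |u|), sq_abs u]

private lemma huber_ineq {ε c w s : ℝ} (hε : 0 < ε) (hc : 0 < c) (hcε : c ≤ ε) (hw : |w| ≤ ε) :
    (max (-c) (min c w) + c) * s - 2*c*(min s 0) ≤
      (if |s| ≤ ε then s^2/2 else ε*|s| - ε^2/2) + w^2/2 + w*s + 2*c^2 := by
  have hwl : -ε ≤ w := neg_le_of_abs_le hw
  have hwr : w ≤ ε := le_of_abs_le hw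
  set u : ℝ := if 0 ≤ s then max (-c) (min c w) + c - w else max (-c) (min c w) - c - w with hu
  have hub2 : u^2 ≤ w^2 + 4*c^2 := by
    rw [hu]; split_ifs <;> (simp only [min_def, max_def]; split_ifs <;> nlinarith)
  have hub1 : |u| ≤ ε := by
    rw [hu]; split_ifs <;>
      (rw [abs_le]; simp only [min_def, max_def]; split_ifs <;> constructor <;> nlinarith)
  have hfen := huber_fenchel hε hub1 (s := s)
  have hlhs : (max (-c) (min c w) + c) * s - 2*c*(min s 0) = s * u + w * s := by
    rw [hu]; rcases le_or_gt 0 s with hsgn | hsgn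
    · rw [if_pos hsgn, min_eq_right hsgn]; ring
    · rw [if_neg (not_le.2 hsgn), min_eq_left hsgn.le]; ring
  rw [hlhs]; nlinarith

private lemma abel_nonneg (g x : ℕ → ℝ) (hg : ∀ i j, i ≤ j → g j ≤ g i)
    (hx : ∀ k, 0 ≤ ∑ i ∈ range k, x i) :
    ∀ N, g N * (∑ i ∈ range N, x i) ≤ ∑ i ∈ range N, g i * x i := by
  intro N
  induction N with
  | zero => simp
  | succ N ih =>
    rw [Finset.sum_range_succ, Finset.sum_range_succ]
    have hP : 0 ≤ ∑ i ∈ range N, x i + x N := by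
      have := hx (N+1); rwa [Finset.sum_range_succ] at this
    have h1 : g (N+1) * (∑ i ∈ range N, x i + x N) ≤ g N * (∑ i ∈ range N, x i + x N) :=
      mul_le_mul_of_nonneg_right (hg N (N+1) (Nat.le_succ N)) hP
    nlinarith [ih]

private lemma swap_sum (n : ℕ) (b T : ℕ → ℝ) :
    ∑ k ∈ range (n+1), (b k - b (k+1)) * (∑ i ∈ range k, T i)
      = ∑ i ∈ range n, (b (i+1) - b (n+1)) * T i := by
  induction n with
  | zero => simp
  | succ n ih =>
    rw [Finset.sum_range_succ (n := n+1), ih,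
      Finset.sum_range_succ (f := fun i => (b (i+1) - b (n+1+1)) * T i),
      Finset.sum_range_succ (f := T)]
    have h1 : ∑ i ∈ range n, (b (i+1) - b (n+1+1)) * T i
        = ∑ i ∈ range n, ((b (i+1) - b (n+1)) * T i + (b (n+1) - b (n+1+1)) * T i) := by
      apply Finset.sum_congr rfl; intros; ring
    rw [h1, Finset.sum_add_distrib, ← Finset.mul_sum]
    ring

private lemma exists_sorted_enum {V : Type*} [Fintype V] [DecidableEq V] [Nonempty V]
    (w : V → ℝ) :
    ∃ (E : ℕ → V) (idx : V → ℕ),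
      (∀ j, idx j < Fintype.card V) ∧ (∀ j, E (idx j) = j) ∧
      (∀ i, i < Fintype.card V → idx (E i) = i) ∧
      (∀ i j : ℕ, i ≤ j → j < Fintype.card V → w (E j) ≤ w (E i)) := by
  classical
  set n := Fintype.card V with hn
  let g : V ≃ Fin n := Fintype.equivFin V
  let u : Fin n → ℝ := fun i => - w (g.symm i)
  let π := Tuple.sort u
  let e : Fin n ≃ V := π.trans g.symm
  refine ⟨fun i => if h : i < n then e ⟨i, h⟩ else Classical.arbitrary V,
    fun j => (e.symm j : ℕ), fun j => (e.symm j).isLt, ?_, ?_, ?_⟩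
  · intro j
    simp only [dif_pos (e.symm j).isLt, Fin.eta, Equiv.apply_symm_apply]
  · intro i h
    simp only [dif_pos h, Equiv.symm_apply_apply]
  · intro i j hij hj
    have hi : i < n := lt_of_le_of_lt hij hj
    simp only [dif_pos hi, dif_pos hj]
    have := Tuple.monotone_sort u (show (⟨i, hi⟩ : Fin n) ≤ ⟨j, hj⟩ from hij)
    simp only [Function.comp_apply, u] at this
    have he1 : e ⟨i, hi⟩ = g.symm (π ⟨i, hi⟩) := rfl
    have he2 : e ⟨j, hj⟩ = g.symm (π ⟨j, hj⟩) := rfl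
    rw [he1, he2]
    linarith

/-- For a normalized submodular `F` with Lovász extension `f`,
`w ∈ [−ε,ε]^V`, `s ∈ B(F)`, and the primal-dual gap
`η_C = f(w) + ½‖w‖₂² + Σ_j ψ_ε*(s_j)`, every `c ∈ (0, ε]` yields some
`α ∈ [−c, c]` with `F({w ≥ α}) − Σ_j min(s_j, 0) ≤ η_C/(2c) + c·n`. -/
theorem stmt9 {V : Type*} [Fintype V] [DecidableEq V]
    (F : Finset V → ℝ)
    (hsub : ∀ A B : Finset V, F (A ∪ B) + F (A ∩ B) ≤ F A + F B)
    (hnorm : F ∅ = 0)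
    (ε : ℝ) (hε : 0 < ε)
    (f : (V → ℝ) → ℝ)
    (hf : ∀ w : V → ℝ, f w = sSup {x : ℝ | ∃ s : V → ℝ,
      ((∑ j, s j) = F Finset.univ ∧ ∀ A : Finset V, (∑ j ∈ A, s j) ≤ F A) ∧
      x = ∑ j, w j * s j})
    (w : V → ℝ) (hw : ∀ j, |w j| ≤ ε)
    (s : V → ℝ)
    (hs : (∑ j, s j) = F Finset.univ ∧ ∀ A : Finset V, (∑ j ∈ A, s j) ≤ F A)
    (ηC : ℝ)
    (hηC : ηC = f w + (1/2) * (∑ j, (w j)^2) +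
      ∑ j, (if |s j| ≤ ε then (s j)^2/2 else ε * |s j| - ε^2/2)) :
    ∀ c ∈ Set.Ioc (0:ℝ) ε, ∃ α ∈ Set.Icc (-c) c,
      F (Finset.univ.filter (fun j => α ≤ w j)) - (∑ j, min (s j) 0) ≤
        ηC / (2 * c) + c * (Fintype.card V : ℝ) := by
  intro c hc
  obtain ⟨hc0, hcε⟩ := hc
  rcases isEmpty_or_nonempty V with hV | hV
  · -- empty case
    have huniv : (univ : Finset V) = ∅ := Finset.univ_eq_empty
    have hFu : F univ = 0 := by rw [huniv, hnorm]
    have hset : {x : ℝ | ∃ s : V → ℝ,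
        ((∑ j, s j) = F Finset.univ ∧ ∀ A : Finset V, (∑ j ∈ A, s j) ≤ F A) ∧
        x = ∑ j, w j * s j} = {0} := by
      ext x
      simp only [Set.mem_setOf_eq, Set.mem_singleton_iff]
      constructor
      · rintro ⟨s', _, rfl⟩
        rw [huniv]; simp
      · rintro rfl
        refine ⟨fun _ => 0, ⟨?_, ?_⟩, by simp⟩
        · rw [hFu]; simp
        · intro A
          rw [Finset.eq_empty_of_isEmpty A, hnorm]; simp
    have hfw : f w = 0 := by rw [hf, hset, csSup_singleton]
    have hηC0 : ηC = 0 := by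
      rw [hηC, hfw, huniv]; simp
    refine ⟨c, ⟨by linarith, le_rfl⟩, ?_⟩
    rw [hηC0]
    simp [huniv, hnorm]
  · -- main case
    obtain ⟨E, idx, hidx_lt, hE_idx, hidx_E, hsorted⟩ := exists_sorted_enum w
    set n := Fintype.card V with hn
    set v : ℕ → ℝ := fun i => if i < n then w (E i) else -(ε+1) with hv
    set S : ℕ → Finset V := fun k => univ.filter (fun j => idx j < k) with hS
    set T : ℕ → ℝ := fun i => F (S (i+1)) - F (S i) with hT
    set t : V → ℝ := fun j => T (idx j) with ht
    set b : ℕ → ℝ := fun k => if k = 0 then c else max (-c) (min c (v (k-1))) with hb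
    set m : V → ℝ := fun j => max (-c) (min c (w j)) + c with hm
    have hv_anti : ∀ i j : ℕ, i ≤ j → v j ≤ v i := by
      intro i j hij
      by_cases hj : j < n
      · have hi : i < n := lt_of_le_of_lt hij hj
        simp only [hv, if_pos hi, if_pos hj]
        exact hsorted i j hij hj
      · by_cases hi : i < n
        · simp only [hv, if_neg hj, if_pos hi]
          have := neg_le_of_abs_le (hw (E i))
          linarith
        · simp [hv, if_neg hj, if_neg hi]
    have hvw : ∀ j, v (idx j) = w j := by
      intro j; simp only [hv, if_pos (hidx_lt j), hE_idx j]
    have hS0 : S 0 = ∅ := by simp [hS]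
    have hSn : S n = univ := by
      simp only [hS]
      exact filter_true_of_mem fun j _ => hidx_lt j
    have hSmono : ∀ k l : ℕ, k ≤ l → S k ⊆ S l := by
      intro k l hkl j hj
      simp only [hS, mem_filter, mem_univ, true_and] at *
      omega
    have hSsucc : ∀ i, i < n → S (i+1) = insert (E i) (S i) := by
      intro i hi; ext j
      simp only [hS, mem_filter, mem_univ, true_and, Finset.mem_insert]
      constructor
      · intro h
        rcases Nat.lt_succ_iff_lt_or_eq.1 h with h' | h'
        · exact Or.inr h'
        · exact Or.inl (by rw [← hE_idx j, h'])
      · rintro (rfl | h)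
        · rw [hidx_E i hi]; omega
        · omega
    have hSimg : ∀ k, k ≤ n → S k = (range k).image E := by
      intro k hk; ext j
      simp only [hS, mem_filter, mem_univ, true_and, Finset.mem_image, mem_range]
      constructor
      · intro hj; exact ⟨idx j, hj, hE_idx j⟩
      · rintro ⟨i, hik, rfl⟩
        rw [hidx_E i (lt_of_lt_of_le hik hk)]; exact hik
    have hSsum : ∀ (h : V → ℝ) (k : ℕ), k ≤ n → ∑ j ∈ S k, h j = ∑ i ∈ range k, h (E i) := by
      intro h k hk
      rw [hSimg k hk]
      apply Finset.sum_image
      intro x hx y hy hxy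
      have h2 := congrArg idx hxy
      rwa [hidx_E x (lt_of_lt_of_le (mem_range.1 hx) hk),
        hidx_E y (lt_of_lt_of_le (mem_range.1 hy) hk)] at h2
    have ht_tel : ∀ k, ∑ i ∈ range k, T i = F (S k) := by
      intro k
      have h1 := Finset.sum_range_sub (fun i => F (S i)) k
      rw [hS0, hnorm, sub_zero] at h1
      rw [hT]; exact h1
    have htE : ∀ i, i < n → t (E i) = T i := by
      intro i hi; simp only [ht, hidx_E i hi]
    have ht_S : ∀ k, k ≤ n → ∑ j ∈ S k, t j = F (S k) := by
      intro k hk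
      rw [hSsum t k hk,
        Finset.sum_congr rfl (fun i hi => htE i (lt_of_lt_of_le (mem_range.1 hi) hk)), ht_tel]
    have hfeas : ∀ A : Finset V, ∑ j ∈ A, t j ≤ F A := by
      intro A
      have himg : A = ((range n).filter (fun i => E i ∈ A)).image E := by
        ext j
        simp only [Finset.mem_image, mem_filter, mem_range]
        constructor
        · intro hj
          exact ⟨idx j, ⟨hidx_lt j, by rw [hE_idx j]; exact hj⟩, hE_idx j⟩
        · rintro ⟨i, ⟨_, hmem⟩, rfl⟩; exact hmem
      have hA_eq : ∑ j ∈ A, t j = ∑ i ∈ (range n).filter (fun i => E i ∈ A), T i := by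
        conv_lhs => rw [himg]
        rw [Finset.sum_image (by
          intro x hx y hy hxy
          have h2 := congrArg idx hxy
          rwa [hidx_E x (mem_range.1 (mem_filter.1 hx).1),
            hidx_E y (mem_range.1 (mem_filter.1 hy).1)] at h2)]
        apply Finset.sum_congr rfl
        intro i hi
        exact htE i (mem_range.1 (mem_filter.1 hi).1)
      rw [hA_eq]
      have hle : ∀ i ∈ (range n).filter (fun i => E i ∈ A),
          T i ≤ F (A ∩ S (i+1)) - F (A ∩ S i) := by
        intro i hi
        obtain ⟨hin, hiA⟩ := mem_filter.1 hi
        have hin' : i < n := mem_range.1 hin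
        have hsub' := hsub (S i) (A ∩ S (i+1))
        have h1 : S i ∪ (A ∩ S (i+1)) = S (i+1) := by
          rw [hSsucc i hin']
          ext j
          simp only [Finset.mem_union, Finset.mem_inter, Finset.mem_insert]
          constructor
          · rintro (h | ⟨hA', (rfl | h)⟩)
            · exact Or.inr h
            · exact Or.inl rfl
            · exact Or.inr h
          · rintro (rfl | h)
            · exact Or.inr ⟨hiA, Or.inl rfl⟩
            · exact Or.inl h
        have h2 : S i ∩ (A ∩ S (i+1)) = A ∩ S i := by
          ext j
          simp only [Finset.mem_inter]
          constructor
          · rintro ⟨h1', h2', _⟩; exact ⟨h2', h1'⟩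
          · rintro ⟨h1', h2'⟩
            exact ⟨h2', h1', hSmono i (i+1) (Nat.le_succ i) h2'⟩
        rw [h1, h2] at hsub'
        simp only [hT]
        linarith
      calc ∑ i ∈ (range n).filter (fun i => E i ∈ A), T i
          ≤ ∑ i ∈ (range n).filter (fun i => E i ∈ A), (F (A ∩ S (i+1)) - F (A ∩ S i)) :=
            Finset.sum_le_sum hle
        _ = ∑ i ∈ range n, (F (A ∩ S (i+1)) - F (A ∩ S i)) := by
            apply Finset.sum_subset (Finset.filter_subset _ _)
            intro i hin hinot
            have hniA : E i ∉ A := by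
              intro hmem
              exact hinot (mem_filter.2 ⟨hin, hmem⟩)
            rw [hSsucc i (mem_range.1 hin), Finset.inter_insert_of_notMem hniA, sub_self]
        _ = F (A ∩ S n) - F (A ∩ S 0) := Finset.sum_range_sub (fun k => F (A ∩ S k)) n
        _ = F A := by rw [hSn, hS0, Finset.inter_univ, Finset.inter_empty, hnorm, sub_zero]
    have ht_univ : ∑ j, t j = F univ := by
      have := ht_S n le_rfl
      rwa [hSn] at this
    have hbdd : BddAbove {x : ℝ | ∃ s' : V → ℝ,
        ((∑ j, s' j) = F univ ∧ ∀ A : Finset V, (∑ j ∈ A, s' j) ≤ F A) ∧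
        x = ∑ j, w j * s' j} := by
      refine ⟨∑ j, |w j| * (|F {j}| + |F univ| + |F (univ.erase j)|), ?_⟩
      rintro x ⟨s', ⟨hs1, hs2⟩, rfl⟩
      apply Finset.sum_le_sum
      intro j _
      have hup : s' j ≤ F {j} := by
        have := hs2 {j}; simpa using this
      have hlo : F univ - F (univ.erase j) ≤ s' j := by
        have h2 := hs2 (univ.erase j)
        rw [Finset.sum_erase_eq_sub (mem_univ j), hs1] at h2
        linarith
      have habs : |s' j| ≤ |F {j}| + |F univ| + |F (univ.erase j)| := by
        rw [abs_le]
        constructor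
        · linarith [neg_abs_le (F univ), le_abs_self (F (univ.erase j)),
            abs_nonneg (F ({j} : Finset V))]
        · linarith [le_abs_self (F ({j} : Finset V)), abs_nonneg (F univ),
            abs_nonneg (F (univ.erase j))]
      calc w j * s' j ≤ |w j * s' j| := le_abs_self _
        _ = |w j| * |s' j| := abs_mul _ _
        _ ≤ |w j| * (|F {j}| + |F univ| + |F (univ.erase j)|) :=
            mul_le_mul_of_nonneg_left habs (abs_nonneg _)
    have hfw_ge : ∑ j, w j * t j ≤ f w := by
      rw [hf]
      exact le_csSup hbdd ⟨t, ⟨ht_univ, hfeas⟩, rfl⟩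
    have hb0 : b 0 = c := by simp [hb]
    have hvXn : v n = -(ε+1) := by simp [hv]
    have hblast : b (n+1) = -c := by
      simp only [hb, Nat.add_sub_cancel, if_neg (Nat.succ_ne_zero n), hvXn]
      rw [min_eq_right (by linarith), max_eq_left (by linarith)]
    have hbk_bounds : ∀ k, -c ≤ b k ∧ b k ≤ c := by
      intro k
      rcases Nat.eq_zero_or_pos k with rfl | hk
      · rw [hb0]; exact ⟨by linarith, le_rfl⟩
      · have hkne : k ≠ 0 := by omega
        simp only [hb, if_neg hkne]
        exact ⟨le_max_left _ _, max_le (by linarith) (min_le_left _ _)⟩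
    have hb_anti : ∀ k l : ℕ, k ≤ l → b l ≤ b k := by
      intro k l hkl
      rcases Nat.eq_zero_or_pos k with rfl | hk
      · exact hb0 ▸ (hbk_bounds l).2
      · have hkne : k ≠ 0 := by omega
        have hlne : l ≠ 0 := by omega
        simp only [hb, if_neg hkne, if_neg hlne]
        exact max_le_max le_rfl (min_le_min le_rfl (hv_anti (k-1) (l-1) (by omega)))
    have hmE : ∀ i, i < n → m (E i) = b (i+1) + c := by
      intro i hi
      simp [hm, hb, hv, hi, Nat.succ_ne_zero]
    -- Step II
    have hstep2 : ∑ j, m j * (t j - s j) ≤ f w - ∑ j, w j * s j := by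
      set g : ℕ → ℝ := fun i => v i - (max (-c) (min c (v i)) + c) with hg
      set x : ℕ → ℝ := fun i => if i < n then t (E i) - s (E i) else 0 with hx
      have hganti : ∀ i j : ℕ, i ≤ j → g j ≤ g i := by
        intro i j hij
        simp only [hg]
        exact clamp_step_mono (hv_anti i j hij)
      have hxpart : ∀ k, ∑ i ∈ range k, x i = F (S (min k n)) - ∑ j ∈ S (min k n), s j := by
        intro k
        have h1 : ∑ i ∈ range k, x i = ∑ i ∈ range (min k n), (t (E i) - s (E i)) := by
          rcases le_total k n with hkn | hkn
          · rw [min_eq_left hkn]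
            apply Finset.sum_congr rfl
            intro i hi
            simp only [hx, if_pos (lt_of_lt_of_le (mem_range.1 hi) hkn)]
          · rw [min_eq_right hkn]
            rw [← Finset.sum_subset (Finset.range_subset_range.2 hkn) (by
              intro i _ hin
              simp only [hx, if_neg (by simp only [mem_range] at hin; exact hin)])]
            apply Finset.sum_congr rfl
            intro i hi
            simp only [hx, if_pos (mem_range.1 hi)]
        rw [h1, ← hSsum (fun j => t j - s j) (min k n) (min_le_right k n),
          Finset.sum_sub_distrib, ht_S (min k n) (min_le_right k n)]
      have hxnn : ∀ k, 0 ≤ ∑ i ∈ range k, x i := by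
        intro k
        rw [hxpart k]
        have := hs.2 (S (min k n))
        linarith
      have habel := abel_nonneg g x hganti hxnn n
      have hxn : ∑ i ∈ range n, x i = 0 := by
        rw [hxpart n, min_self, hSn, hs.1]
        ring
      rw [hxn, mul_zero] at habel
      have hgx : ∑ i ∈ range n, g i * x i = ∑ j, (w j - m j) * (t j - s j) := by
        rw [show (univ : Finset V) = S n from hSn.symm,
          hSsum (fun j => (w j - m j) * (t j - s j)) n le_rfl]
        apply Finset.sum_congr rfl
        intro i hi
        have hi' : i < n := mem_range.1 hi
        simp [hg, hx, hm, hv, hi']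
      rw [hgx] at habel
      have hsplit : ∑ j, m j * (t j - s j) + ∑ j, (w j - m j) * (t j - s j)
          = ∑ j, w j * t j - ∑ j, w j * s j := by
        rw [← Finset.sum_add_distrib, ← Finset.sum_sub_distrib]
        apply Finset.sum_congr rfl
        intros; ring
      linarith
    -- Step I
    have hstep1 : ∑ j, (m j * s j - 2*c*(min (s j) 0)) ≤
        (∑ j, (if |s j| ≤ ε then (s j)^2/2 else ε*|s j| - ε^2/2)) + (∑ j, (w j)^2/2)
          + (∑ j, w j * s j) + 2*c^2*(n:ℝ) := by
      have h1 : ∀ j : V, m j * s j - 2*c*(min (s j) 0) ≤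
          (if |s j| ≤ ε then (s j)^2/2 else ε*|s j| - ε^2/2) + (w j)^2/2 + w j * s j + 2*c^2 := by
        intro j
        simp only [hm]
        exact huber_ineq hε hc0 hcε (hw j)
      calc ∑ j, (m j * s j - 2*c*(min (s j) 0))
          ≤ ∑ j, ((if |s j| ≤ ε then (s j)^2/2 else ε*|s j| - ε^2/2) + (w j)^2/2
              + w j * s j + 2*c^2) :=
            Finset.sum_le_sum (fun j _ => h1 j)
        _ = (∑ j, (if |s j| ≤ ε then (s j)^2/2 else ε*|s j| - ε^2/2)) + (∑ j, (w j)^2/2)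
              + (∑ j, w j * s j) + 2*c^2*(n:ℝ) := by
            rw [Finset.sum_add_distrib, Finset.sum_add_distrib, Finset.sum_add_distrib,
              Finset.sum_const, Finset.card_univ, nsmul_eq_mul, ← hn]
            ring
    -- combine
    have hmain : ∑ j, m j * t j - 2*c*(∑ j, min (s j) 0) ≤ ηC + 2*c^2*(n:ℝ) := by
      have hsplit2 : ∑ j, m j * t j - 2*c*(∑ j, min (s j) 0)
          = ∑ j, m j * (t j - s j) + ∑ j, (m j * s j - 2*c*(min (s j) 0)) := by
        rw [← Finset.sum_add_distrib, Finset.mul_sum, ← Finset.sum_sub_distrib]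
        apply Finset.sum_congr rfl
        intros; ring
      have hhalf : (1/2 : ℝ) * (∑ j, (w j)^2) = ∑ j, (w j)^2/2 := by
        rw [Finset.mul_sum]
        apply Finset.sum_congr rfl
        intros; ring
      have hηC' : ηC = f w + (∑ j, (w j)^2/2)
          + ∑ j, (if |s j| ≤ ε then (s j)^2/2 else ε*|s j| - ε^2/2) := by
        rw [hηC, hhalf]
      rw [hsplit2, hηC']
      linarith
    -- Step III
    have hIII : ∑ k ∈ range (n+1), (b k - b (k+1)) * F (S k) = ∑ j, m j * t j := by
      have h1 : ∀ k ∈ range (n+1), (b k - b (k+1)) * F (S k)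
          = (b k - b (k+1)) * ∑ i ∈ range k, T i := by
        intro k _; rw [ht_tel]
      rw [Finset.sum_congr rfl h1, swap_sum n b T,
        show (univ : Finset V) = S n from hSn.symm,
        hSsum (fun j => m j * t j) n le_rfl]
      apply Finset.sum_congr rfl
      intro i hi
      have hi' : i < n := mem_range.1 hi
      rw [hmE i hi', htE i hi', hblast]
      ring
    have hsum_lam : ∑ k ∈ range (n+1), (b k - b (k+1)) = 2*c := by
      rw [Finset.sum_range_sub' b (n+1), hb0, hblast]
      ring
    have htotal : ∑ k ∈ range (n+1), (b k - b (k+1)) * (F (S k) - ∑ j, min (s j) 0)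
        ≤ ηC + 2*c^2*(n:ℝ) := by
      have hexp : ∑ k ∈ range (n+1), (b k - b (k+1)) * (F (S k) - ∑ j, min (s j) 0)
          = (∑ k ∈ range (n+1), (b k - b (k+1)) * F (S k))
            - (∑ k ∈ range (n+1), (b k - b (k+1))) * (∑ j, min (s j) 0) := by
        rw [Finset.sum_mul, ← Finset.sum_sub_distrib]
        apply Finset.sum_congr rfl
        intros; ring
      rw [hexp, hIII, hsum_lam]
      linarith
    have hex : ∃ k ∈ range (n+1), 0 < b k - b (k+1) ∧
        F (S k) - ∑ j, min (s j) 0 ≤ ηC / (2*c) + c*(n:ℝ) := by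
      by_contra hcon
      push_neg at hcon
      have hR : ηC + 2*c^2*(n:ℝ) = 2*c*(ηC / (2*c) + c*(n:ℝ)) := by
        field_simp
      have hlam_nn : ∀ k, 0 ≤ b k - b (k+1) :=
        fun k => sub_nonneg.2 (hb_anti k (k+1) (Nat.le_succ k))
      have hlt : 2*c*(ηC / (2*c) + c*(n:ℝ))
          < ∑ k ∈ range (n+1), (b k - b (k+1)) * (F (S k) - ∑ j, min (s j) 0) := by
        have hcalc : ∑ k ∈ range (n+1), (b k - b (k+1)) * (ηC / (2*c) + c*(n:ℝ))
            = 2*c*(ηC / (2*c) + c*(n:ℝ)) := by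
          rw [← Finset.sum_mul, hsum_lam]
        rw [← hcalc]
        apply Finset.sum_lt_sum
        · intro k hk
          rcases eq_or_lt_of_le (hlam_nn k) with heq | hpos
          · rw [← heq]; simp
          · exact mul_le_mul_of_nonneg_left (le_of_lt (hcon k hk hpos)) (le_of_lt hpos)
        · have hkex : ∃ k ∈ range (n+1), b k - b (k+1) ≠ 0 := by
            by_contra hall
            push_neg at hall
            have hzero : ∑ k ∈ range (n+1), (b k - b (k+1)) = 0 :=
              Finset.sum_eq_zero fun k hk => hall k hk
            rw [hsum_lam] at hzero; linarith
          obtain ⟨k, hk, hne⟩ := hkex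
          have hpos : 0 < b k - b (k+1) := lt_of_le_of_ne (hlam_nn k) (Ne.symm hne)
          exact ⟨k, hk, mul_lt_mul_of_pos_left (hcon k hk hpos) hpos⟩
      linarith
    obtain ⟨k, hk, hpos, hval⟩ := hex
    have hkn : k ≤ n := Nat.lt_succ_iff.1 (mem_range.1 hk)
    refine ⟨b k, ⟨(hbk_bounds k).1, (hbk_bounds k).2⟩, ?_⟩
    have hSet : univ.filter (fun j => b k ≤ w j) = S k := by
      ext j
      simp only [hS, mem_filter, mem_univ, true_and]
      rcases Nat.eq_zero_or_pos k with rfl | hkpos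
      · simp only [Nat.not_lt_zero, iff_false, not_le]
        have hb1 : b 1 < c := by
          rw [hb0] at hpos; linarith
        have hv0c : v 0 < c := by
          by_contra hge
          push_neg at hge
          have hb1c : b 1 = c := by
            simp only [hb, if_neg one_ne_zero]
            rw [show (1:ℕ) - 1 = 0 from rfl, min_eq_left hge, max_eq_right (by linarith)]
          linarith
        have hwj : w j ≤ v 0 := by
          rw [← hvw j]; exact hv_anti 0 (idx j) (Nat.zero_le _)
        rw [hb0]; linarith
      · have hkne : k ≠ 0 := by omega
        have hbk_eq : b k = max (-c) (min c (v (k-1))) := by simp only [hb, if_neg hkne]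
        have hbk1_lt : b (k+1) < b k := by linarith
        have hbk_gt : -c < b k := lt_of_le_of_lt (hbk_bounds (k+1)).1 hbk1_lt
        have hbk_min : b k = min c (v (k-1)) := by
          rcases max_choice (-c) (min c (v (k-1))) with h | h
          · exfalso
            rw [hbk_eq, h] at hbk_gt
            exact lt_irrefl _ hbk_gt
          · rw [hbk_eq, h]
        have hbk_le_v : b k ≤ v (k-1) := hbk_min ▸ min_le_right c (v (k-1))
        have hvk_le : v k ≤ b (k+1) := by
          have hb1_eq : b (k+1) = max (-c) (min c (v k)) := by
            simp only [hb, if_neg (Nat.succ_ne_zero k), Nat.add_sub_cancel]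
          rcases le_total (v k) c with hle | hge
          · rw [hb1_eq, min_eq_right hle]; exact le_max_right _ _
          · exfalso
            rw [hb1_eq, min_eq_left hge, max_eq_right (by linarith)] at hbk1_lt
            exact absurd (hbk_bounds k).2 (not_le.2 hbk1_lt)
        constructor
        · intro hble
          by_contra hge
          push_neg at hge
          have h2 : v (idx j) ≤ v k := hv_anti k (idx j) hge
          rw [hvw j] at h2
          linarith
        · intro hlt
          have h2 : v (k-1) ≤ v (idx j) := hv_anti (idx j) (k-1) (by omega)
          rw [hvw j] at h2
          linarith
    rw [hSet]
    calc F (S k) - ∑ j, min (s j) 0 ≤ ηC / (2*c) + c*(n:ℝ) := hval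
      _ = ηC / (2 * c) + c * (n:ℝ) := by ring
end

section
/- Let F be a normalized submodular set function on a finite set V, f its Lovász extension (the support function of B(F)), and ε > 0. Let w* be a minimizer of w ↦ f(w) + (1/2)‖w‖₂² over the box [−ε, ε]^V. Then for every α ∈ (−ε, ε), the suplevel set { j ∈ V : w*_j ≥ α } minimizes the set function A ↦ F(A) + α·|A| over all subsets A ⊆ V; in particular { j ∈ V : w*_j ≥ 0 } is a minimizer of F. -/
/-!
Order `V` by decreasing `w*`, breaking ties so that the elements of `A` come first, and let `s` be
Edmonds' greedy vertex of `B(F)` for this order. It maximises `⟨w, ·⟩` over `B(F)` for every `w`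
that is antitone for the order, so `f` is linear on that cone. With `B = {w* ≥ α}`, the
perturbation `w* + t (1_A - 1_B)` stays in the cone and in the box for small `t > 0`, and
optimality of `w*` yields the first-order condition `⟨1_A - 1_B, s + w*⟩ ≥ 0`. Since `s(B) = F(B)`,
`s(A) ≤ F(A)` and `w* ≥ α` exactly on `B`, this rearranges to `F(B) + α|B| ≤ F(A) + α|A|`.
-/

open Finset Filter Topology

section Greedy

variable {V : Type*} [LinearOrder V]

lemma isLowerSet_of_insert [DecidableEq V] {a : V} {s : Finset V} (hs : ∀ x ∈ s, x < a)
    (h : IsLowerSet ((insert a s : Finset V) : Set V)) : IsLowerSet (s : Set V) := by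
  intro x y hyx hx
  have hy : y ∈ insert a s := h hyx (mem_insert_of_mem hx)
  exact (mem_insert.1 hy).resolve_left (hyx.trans_lt (hs x hx)).ne

variable [Fintype V]

noncomputable def greedyPt (F : Finset V → ℝ) (j : V) : ℝ :=
  F (univ.filter (· ≤ j)) - F (univ.filter (· < j))

variable {F : Finset V → ℝ}

lemma insert_union_filter_lt [DecidableEq V] {a : V} {s : Finset V} (hs : ∀ x ∈ s, x < a) :
    insert a s ∪ univ.filter (· < a) = univ.filter (· ≤ a) := by
  ext x
  simp only [mem_union, mem_insert, mem_filter, mem_univ, true_and, le_iff_lt_or_eq]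
  constructor
  · rintro ((rfl | hx) | hx)
    exacts [Or.inr rfl, Or.inl (hs x hx), Or.inl hx]
  · rintro (hx | rfl)
    exacts [Or.inr hx, Or.inl (Or.inl rfl)]

lemma insert_inter_filter_lt [DecidableEq V] {a : V} {s : Finset V} (hs : ∀ x ∈ s, x < a) :
    insert a s ∩ univ.filter (· < a) = s := by
  ext x
  simp only [mem_inter, mem_insert, mem_filter, mem_univ, true_and]
  constructor
  · rintro ⟨rfl | hx, hxa⟩
    exacts [absurd hxa (lt_irrefl x), hx]
  · exact fun hx => ⟨Or.inr hx, hs x hx⟩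

lemma greedyPt_eq_sub [DecidableEq V] {a : V} {s : Finset V} (hs : ∀ x ∈ s, x < a)
    (h : IsLowerSet ((insert a s : Finset V) : Set V)) : greedyPt F a = F (insert a s) - F s := by
  have hlt : univ.filter (· < a) ⊆ insert a s := fun x hx =>
    h (mem_filter.1 hx).2.le (mem_insert_self a s)
  rw [greedyPt, ← insert_union_filter_lt hs, union_eq_left.2 hlt,
    ← insert_inter_filter_lt hs, inter_eq_right.2 hlt]

lemma sum_greedyPt_of_isLowerSet (hF : F ∅ = 0) (X : Finset V) (hX : IsLowerSet (X : Set V)) :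
    ∑ j ∈ X, greedyPt F j = F X := by
  classical
  induction X using Finset.induction_on_max with
  | empty => simp [hF]
  | insert a s hs ih =>
    rw [sum_insert (fun h => lt_irrefl a (hs a h)), ih (isLowerSet_of_insert hs hX),
      greedyPt_eq_sub hs hX]
    ring

lemma sum_greedyPt_le [DecidableEq V]
    (hsub : ∀ A B : Finset V, F (A ∪ B) + F (A ∩ B) ≤ F A + F B) (hF : F ∅ = 0)
    (X : Finset V) : ∑ j ∈ X, greedyPt F j ≤ F X := by
  induction X using Finset.induction_on_max with
  | empty => simp [hF]
  | insert a s hs ih =>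
    have hsubmod := hsub (insert a s) (univ.filter (· < a))
    rw [insert_union_filter_lt hs, insert_inter_filter_lt hs] at hsubmod
    rw [sum_insert (fun h => lt_irrefl a (hs a h)), greedyPt]
    linarith

-- Abel summation along the order: the slack `s(X) - F(X) ≤ 0` of each initial segment `X` enters
-- with the weight `w (max X) - w (next element)`, which is `≥ 0`.
lemma sum_mul_sub_greedyPt_le (hF : F ∅ = 0) {w s : V → ℝ} (hw : Antitone w)
    (hs : ∀ X : Finset V, ∑ j ∈ X, s j ≤ F X) (X : Finset V) (hX : IsLowerSet (X : Set V))
    (c : ℝ) (hc : ∀ x ∈ X, c ≤ w x) :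
    ∑ j ∈ X, w j * (s j - greedyPt F j) ≤ c * (∑ j ∈ X, s j - F X) := by
  classical
  induction X using Finset.induction_on_max generalizing c with
  | empty => simp [hF]
  | insert a t ht ih =>
    have hat : a ∉ t := fun h => lt_irrefl a (ht a h)
    have hrest := ih (isLowerSet_of_insert ht hX) (w a) fun x hx => hw (ht x hx).le
    have hslack : s a + ∑ j ∈ t, s j - F (insert a t) ≤ 0 := by
      have := hs (insert a t)
      rw [sum_insert hat] at this
      linarith
    rw [sum_insert hat, sum_insert hat, greedyPt_eq_sub ht hX]
    nlinarith [mul_le_mul_of_nonpos_right (hc a (mem_insert_self a t)) hslack]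

lemma sum_mul_le_sum_mul_greedyPt (hF : F ∅ = 0) {w s : V → ℝ} (hw : Antitone w)
    (hs : ∀ X : Finset V, ∑ j ∈ X, s j ≤ F X) (huniv : ∑ j, s j = F univ) :
    ∑ j, w j * s j ≤ ∑ j, w j * greedyPt F j := by
  obtain ⟨c, hc⟩ := (Set.finite_range w).bddBelow
  have h := sum_mul_sub_greedyPt_le hF hw hs univ (by simpa using isLowerSet_univ) c
    fun x _ => hc ⟨x, rfl⟩
  rw [huniv, sub_self, mul_zero] at h
  simpa [mul_sub] using h

theorem isGreatest_sum_mul_greedyPt [DecidableEq V]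
    (hsub : ∀ A B : Finset V, F (A ∪ B) + F (A ∩ B) ≤ F A + F B) (hF : F ∅ = 0)
    {w : V → ℝ} (hw : Antitone w) :
    IsGreatest {x : ℝ | ∃ s : V → ℝ,
      ((∑ j, s j) = F univ ∧ ∀ A : Finset V, (∑ j ∈ A, s j) ≤ F A) ∧ x = ∑ j, w j * s j}
      (∑ j, w j * greedyPt F j) :=
  ⟨⟨greedyPt F, ⟨sum_greedyPt_of_isLowerSet hF univ (by simpa using isLowerSet_univ),
      sum_greedyPt_le hsub hF⟩, rfl⟩,
    by rintro x ⟨s, ⟨huniv, hs⟩, rfl⟩; exact sum_mul_le_sum_mul_greedyPt hF hw hs huniv⟩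

end Greedy

lemma eventually_add_mul_le_add_mul {x y d e : ℝ} (hxy : x ≤ y) (heq : x = y → d ≤ e) :
    ∀ᶠ t in 𝓝[>] (0 : ℝ), x + t * d ≤ y + t * e := by
  rcases hxy.lt_or_eq with hlt | rfl
  · have hcont : Continuous fun t : ℝ => x + t * d - (y + t * e) := by fun_prop
    have h := (hcont.tendsto' 0 (x - y) (by simp)).eventually (gt_mem_nhds (sub_neg.2 hlt))
    exact (h.filter_mono nhdsWithin_le_nhds).mono fun t ht => (sub_neg.1 ht).le
  · filter_upwards [self_mem_nhdsWithin] with t (ht : 0 < t)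
    gcongr
    exact heq rfl

lemma nonneg_of_eventually_nonneg_mul_add_sq_mul {a b : ℝ}
    (h : ∀ᶠ t in 𝓝[>] (0 : ℝ), 0 ≤ t * a + t ^ 2 * b) : 0 ≤ a := by
  have hlin : ∀ᶠ t in 𝓝[>] (0 : ℝ), 0 ≤ a + t * b := by
    filter_upwards [h, self_mem_nhdsWithin] with t hq (ht : 0 < t)
    have : 0 ≤ t * (a + t * b) := by linarith
    exact nonneg_of_mul_nonneg_right this ht
  have hlim : Tendsto (fun t : ℝ => a + t * b) (𝓝[>] 0) (𝓝 a) := by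
    have : Continuous fun t : ℝ => a + t * b := by fun_prop
    exact (this.tendsto' 0 a (by simp)).mono_left nhdsWithin_le_nhds
  exact ge_of_tendsto hlim hlin

lemma eventually_abs_add_mul_le {V : Type*} [Finite V] {ε : ℝ} {w δ : V → ℝ}
    (hw : ∀ j, |w j| ≤ ε) (htop : ∀ j, w j = ε → δ j ≤ 0) (hbot : ∀ j, w j = -ε → 0 ≤ δ j) :
    ∀ᶠ t in 𝓝[>] (0 : ℝ), ∀ j, |w j + t * δ j| ≤ ε := by
  refine eventually_all.2 fun j => ?_
  have hlow := eventually_add_mul_le_add_mul (d := 0) (e := δ j) (neg_le_of_abs_le (hw j))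
    fun h => hbot j h.symm
  have hup := eventually_add_mul_le_add_mul (d := δ j) (e := 0) (le_of_abs_le (hw j)) (htop j)
  filter_upwards [hlow, hup] with t hl hu
  simp only [mul_zero, add_zero] at hl hu
  exact abs_le.2 ⟨hl, hu⟩

section Ordered

variable {V : Type*} [Fintype V] [LinearOrder V]

lemma eventually_antitone_add_mul {w δ : V → ℝ} (hw : Antitone w)
    (htie : ∀ i j, i ≤ j → w i = w j → δ j ≤ δ i) :
    ∀ᶠ t in 𝓝[>] (0 : ℝ), Antitone fun j => w j + t * δ j := by
  have h : ∀ i j : V, ∀ᶠ t in 𝓝[>] (0 : ℝ), i ≤ j → w j + t * δ j ≤ w i + t * δ i := by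
    intro i j
    by_cases hij : i ≤ j
    · exact (eventually_add_mul_le_add_mul (hw hij) fun h => htie i j hij h.symm).mono
        fun _ ht _ => ht
    · exact Eventually.of_forall fun _ h => absurd h hij
  filter_upwards [eventually_all.2 fun i => eventually_all.2 (h i)] with t ht i j hij
  exact ht i j hij

lemma sum_mul_add_nonneg_of_isMinOn {s w₀ δ : V → ℝ} {ε : ℝ}
    (hmin : IsMinOn (fun w : V → ℝ => ∑ j, w j * s j + (1 / 2) * ∑ j, w j ^ 2)
      {w | Antitone w ∧ ∀ j, |w j| ≤ ε} w₀)
    (hanti : Antitone w₀) (hbox : ∀ j, |w₀ j| ≤ ε)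
    (htie : ∀ i j, i ≤ j → w₀ i = w₀ j → δ j ≤ δ i)
    (htop : ∀ j, w₀ j = ε → δ j ≤ 0) (hbot : ∀ j, w₀ j = -ε → 0 ≤ δ j) :
    0 ≤ ∑ j, δ j * (s j + w₀ j) := by
  refine nonneg_of_eventually_nonneg_mul_add_sq_mul (b := (∑ j, δ j ^ 2) / 2) ?_
  filter_upwards [eventually_antitone_add_mul hanti htie,
    eventually_abs_add_mul_le hbox htop hbot] with t hanti_t hbox_t
  have hle := isMinOn_iff.1 hmin _ ⟨hanti_t, hbox_t⟩
  have hexpand : ∑ j, (w₀ j + t * δ j) * s j + (1 / 2) * ∑ j, (w₀ j + t * δ j) ^ 2 =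
      (∑ j, w₀ j * s j + (1 / 2) * ∑ j, w₀ j ^ 2) +
        (t * ∑ j, δ j * (s j + w₀ j) + t ^ 2 * ((∑ j, δ j ^ 2) / 2)) := by
    simp only [mul_sum, sum_div, ← sum_add_distrib]
    exact sum_congr rfl fun j _ => by ring
  linarith

lemma sum_suplevel_le_sum_of_isMinOn {s w₀ : V → ℝ} {ε α : ℝ} {A : Finset V}
    (hmin : IsMinOn (fun w : V → ℝ => ∑ j, w j * s j + (1 / 2) * ∑ j, w j ^ 2)
      {w | Antitone w ∧ ∀ j, |w j| ≤ ε} w₀)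
    (hanti : Antitone w₀) (hbox : ∀ j, |w₀ j| ≤ ε)
    (htieA : ∀ i j, i ≤ j → w₀ i = w₀ j → j ∈ A → i ∈ A) (hα : α ∈ Set.Ioo (-ε) ε) :
    ∑ j ∈ univ.filter (fun j => α ≤ w₀ j), (s j + w₀ j) ≤ ∑ j ∈ A, (s j + w₀ j) := by
  classical
  set B := univ.filter (fun j => α ≤ w₀ j) with hB
  let δ : V → ℝ := fun j => (if j ∈ A then 1 else 0) - (if j ∈ B then 1 else 0)
  have hδ : ∑ j, δ j * (s j + w₀ j) = ∑ j ∈ A, (s j + w₀ j) - ∑ j ∈ B, (s j + w₀ j) := by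
    simp only [δ, sub_mul, ite_mul, one_mul, zero_mul, sum_sub_distrib, sum_ite_mem, univ_inter]
  have htie : ∀ i j, i ≤ j → w₀ i = w₀ j → δ j ≤ δ i := fun i j hij heq => by
    have := htieA i j hij heq
    simp only [δ, hB, mem_filter, mem_univ, true_and, heq]
    split_ifs <;> simp_all
  have htop : ∀ j, w₀ j = ε → δ j ≤ 0 := fun j hj => by
    have : j ∈ B := by simp [hB, hj, hα.2.le]
    simp only [δ, if_pos this]
    split_ifs <;> norm_num
  have hbot : ∀ j, w₀ j = -ε → 0 ≤ δ j := fun j hj => by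
    have : j ∉ B := by simp [hB, hj, hα.1]
    simp only [δ, if_neg this, sub_zero]
    split_ifs <;> norm_num
  linarith [sum_mul_add_nonneg_of_isMinOn hmin hanti hbox htie htop hbot]

end Ordered

lemma exists_linearOrder_antitone {V : Type*} [Fintype V] (w : V → ℝ) (A : Finset V) :
    ∃ L : LinearOrder V, letI := L
      Antitone w ∧ ∀ i j, i ≤ j → w i = w j → j ∈ A → i ∈ A := by
  classical
  -- the `Fin` coordinate only makes the key injective
  let key : V → Lex (ℝ × Lex (ℕ × Fin (Fintype.card V))) := fun j =>
    toLex (-w j, toLex (if j ∈ A then 0 else 1, Fintype.equivFin V j))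
  have hkey : Function.Injective key := fun i j h =>
    (Fintype.equivFin V).injective (congrArg (fun p => (ofLex (ofLex p).2).2) h)
  let L : LinearOrder V := LinearOrder.lift' key hkey
  have hle : ∀ i j : V, i ≤ j ↔ key i ≤ key j := fun _ _ => Iff.rfl
  refine ⟨L, fun i j hij => ?_, fun i j hij heq hjA => ?_⟩
  · rcases Prod.Lex.le_iff.1 ((hle i j).1 hij) with h | ⟨h, -⟩ <;>
      simp only [key, ofLex_toLex, neg_lt_neg_iff, neg_inj] at h <;> linarith
  · rcases Prod.Lex.le_iff.1 ((hle i j).1 hij) with h | ⟨-, h⟩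
    · simp only [key, ofLex_toLex, neg_lt_neg_iff] at h; linarith
    · by_contra hiA
      rcases Prod.Lex.le_iff.1 h with h | ⟨h, -⟩ <;> simp [key, hiA, hjA] at h

lemma add_mul_card_suplevel_le_of_sum_le {V : Type*} [Fintype V] {F : Finset V → ℝ}
    {s w : V → ℝ} {α : ℝ} {A : Finset V} (hA : ∑ j ∈ A, s j ≤ F A)
    (hB : ∑ j ∈ univ.filter (fun j => α ≤ w j), s j = F (univ.filter (fun j => α ≤ w j)))
    (h : ∑ j ∈ univ.filter (fun j => α ≤ w j), (s j + w j) ≤ ∑ j ∈ A, (s j + w j)) :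
    F (univ.filter (fun j => α ≤ w j)) + α * (univ.filter (fun j => α ≤ w j)).card ≤
      F A + α * A.card := by
  classical
  set B := univ.filter (fun j => α ≤ w j)
  have hexchange : ∑ j ∈ B, (α - w j) - ∑ j ∈ A, (α - w j) ≤ 0 := by
    rw [← sum_sdiff_sub_sum_sdiff]
    have hBA : ∑ j ∈ B \ A, (α - w j) ≤ 0 := sum_nonpos fun j hj => by
      have := (mem_filter.1 (mem_sdiff.1 hj).1).2
      linarith
    have hAB : 0 ≤ ∑ j ∈ A \ B, (α - w j) := sum_nonneg fun j hj => by
      have : ¬α ≤ w j := fun h => (mem_sdiff.1 hj).2 (mem_filter.2 ⟨mem_univ j, h⟩)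
      linarith
    linarith
  simp only [sum_add_distrib, sum_sub_distrib, sum_const, nsmul_eq_mul] at h hexchange
  linarith

theorem add_mul_card_suplevel_le {V : Type*} [Fintype V] [DecidableEq V]
    (F : Finset V → ℝ)
    (hsub : ∀ A B : Finset V, F (A ∪ B) + F (A ∩ B) ≤ F A + F B) (hF : F ∅ = 0)
    (ε : ℝ) (f : (V → ℝ) → ℝ)
    (hf : ∀ w : V → ℝ, f w = sSup {x : ℝ | ∃ s : V → ℝ,
      ((∑ j, s j) = F univ ∧ ∀ A : Finset V, (∑ j ∈ A, s j) ≤ F A) ∧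
      x = ∑ j, w j * s j})
    (wstar : V → ℝ) (hwstar : ∀ j, |wstar j| ≤ ε)
    (hmin : ∀ w : V → ℝ, (∀ j, |w j| ≤ ε) →
      f wstar + (1 / 2) * (∑ j, (wstar j) ^ 2) ≤ f w + (1 / 2) * ∑ j, (w j) ^ 2)
    {α : ℝ} (hα : α ∈ Set.Ioo (-ε) ε) (A : Finset V) :
    F (univ.filter (fun j => α ≤ wstar j)) +
        α * (univ.filter (fun j => α ≤ wstar j)).card ≤ F A + α * A.card := by
  obtain ⟨L, hanti, htieA⟩ := exists_linearOrder_antitone wstar A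
  have hBlow : IsLowerSet ((univ.filter (fun j => α ≤ wstar j) : Finset V) : Set V) :=
    fun i j hji hi => by
      simp only [coe_filter, mem_univ, true_and, Set.mem_ofPred_eq] at hi ⊢
      exact hi.trans (hanti hji)
  have hlovasz : ∀ w : V → ℝ, Antitone w → f w = ∑ j, w j * greedyPt F j := fun w hw =>
    (hf w).trans (isGreatest_sum_mul_greedyPt hsub hF hw).csSup_eq
  have hminOn : IsMinOn (fun w : V → ℝ => ∑ j, w j * greedyPt F j + (1 / 2) * ∑ j, w j ^ 2)
      {w | Antitone w ∧ ∀ j, |w j| ≤ ε} wstar := isMinOn_iff.2 fun w ⟨hw, hbox⟩ => by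
    simpa only [hlovasz w hw, hlovasz wstar hanti] using hmin w hbox
  exact add_mul_card_suplevel_le_of_sum_le (sum_greedyPt_le hsub hF A)
    (sum_greedyPt_of_isLowerSet hF _ hBlow)
    (sum_suplevel_le_sum_of_isMinOn hminOn hanti hwstar htieA hα)

/-- If `w*` minimizes `f(w) + ½‖w‖₂²` over the box `[−ε,ε]^V`,
where `f` is the Lovász extension of a normalized submodular `F`, then for every
`α ∈ (−ε, ε)` the suplevel set `{w* ≥ α}` minimizes `A ↦ F(A) + α|A|`; in
particular `{w* ≥ 0}` minimizes `F`. -/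
theorem stmt15 {V : Type*} [Fintype V] [DecidableEq V]
    (F : Finset V → ℝ)
    (hsub : ∀ A B : Finset V, F (A ∪ B) + F (A ∩ B) ≤ F A + F B)
    (hnorm : F ∅ = 0)
    (ε : ℝ) (hε : 0 < ε)
    (f : (V → ℝ) → ℝ)
    (hf : ∀ w : V → ℝ, f w = sSup {x : ℝ | ∃ s : V → ℝ,
      ((∑ j, s j) = F Finset.univ ∧ ∀ A : Finset V, (∑ j ∈ A, s j) ≤ F A) ∧
      x = ∑ j, w j * s j})
    (wstar : V → ℝ) (hwstar : ∀ j, |wstar j| ≤ ε)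
    (hmin : ∀ w : V → ℝ, (∀ j, |w j| ≤ ε) →
      f wstar + (1/2) * (∑ j, (wstar j)^2) ≤ f w + (1/2) * ∑ j, (w j)^2) :
    (∀ α ∈ Set.Ioo (-ε) ε, ∀ A : Finset V,
      F (Finset.univ.filter (fun j => α ≤ wstar j)) +
          α * ((Finset.univ.filter (fun j => α ≤ wstar j)).card : ℝ) ≤
        F A + α * (A.card : ℝ)) ∧
    (∀ A : Finset V, F (Finset.univ.filter (fun j => (0:ℝ) ≤ wstar j)) ≤ F A) := by
  have hlevel := fun α (hα : α ∈ Set.Ioo (-ε) ε) =>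
    add_mul_card_suplevel_le F hsub hnorm ε f hf wstar hwstar hmin hα
  exact ⟨hlevel, fun A => by simpa using hlevel 0 ⟨neg_lt_zero.2 hε, hε⟩ A⟩
end
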